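/- arXiv:2006.00162 — 12 statements merged into one kernel-verified Lean document; each statement's English description precedes it below -/
import Mathlib

section
/- Let E and F be Borel equivalence relations on Polish spaces X and Y. Suppose E is prime to F, i.e., for every Borel homomorphism φ from E to F there is a Borel reduction ρ from E to E such that the range of φ∘ρ is contained in a single F-class. If R is a Borel equivalence relation on a Polish space Z and E is Borel reducible to the product R × F (on Z × Y), then E is Borel reducible to R. -/
/-- φ is a homomorphism from E to F. -/
def Homomorphism {X Y : Type*} (E : X → X → Prop) (F : Y → Y → Prop) (φ : X → Y) : Prop :=
  ∀ x₁ x₂, E x₁ x₂ → F (φ x₁) (φ x₂)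

/-- φ is a reduction from E to F. -/
def Reduction {X Y : Type*} (E : X → X → Prop) (F : Y → Y → Prop) (φ : X → Y) : Prop :=
  ∀ x₁ x₂, E x₁ x₂ ↔ F (φ x₁) (φ x₂)

/-- E is Borel reducible to F. -/
def BorelReducible {X Y : Type*} [MeasurableSpace X] [MeasurableSpace Y]
    (E : X → X → Prop) (F : Y → Y → Prop) : Prop :=
  ∃ φ : X → Y, Measurable φ ∧ Reduction E F φ

/-- E is prime to F. -/
def PrimeTo {X Y : Type*} [MeasurableSpace X] [MeasurableSpace Y]
    (E : X → X → Prop) (F : Y → Y → Prop) : Prop :=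
  ∀ φ : X → Y, Measurable φ → Homomorphism E F φ →
    ∃ ρ : X → X, Measurable ρ ∧ Reduction E E ρ ∧ ∃ y, ∀ x, F (φ (ρ x)) y

theorem stmt0 {X Y Z : Type*}
    [TopologicalSpace X] [PolishSpace X] [MeasurableSpace X] [BorelSpace X]
    [TopologicalSpace Y] [PolishSpace Y] [MeasurableSpace Y] [BorelSpace Y]
    [TopologicalSpace Z] [PolishSpace Z] [MeasurableSpace Z] [BorelSpace Z]
    (E : X → X → Prop) (F : Y → Y → Prop) (R : Z → Z → Prop)
    (hE : Equivalence E) (hEb : MeasurableSet {p : X × X | E p.1 p.2})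
    (hF : Equivalence F) (hFb : MeasurableSet {p : Y × Y | F p.1 p.2})
    (hR : Equivalence R) (hRb : MeasurableSet {p : Z × Z | R p.1 p.2})
    (hPrime : PrimeTo E F)
    (hRed : BorelReducible E (fun p q : Z × Y => R p.1 q.1 ∧ F p.2 q.2)) :
    BorelReducible E R := by
  obtain ⟨φ, hφm, hφr⟩ := hRed
  have hφ₂m : Measurable fun x => (φ x).2 := measurable_snd.comp hφm
  have hhom : Homomorphism E F (fun x => (φ x).2) := fun x₁ x₂ h => ((hφr x₁ x₂).mp h).2
  obtain ⟨ρ, hρm, hρr, y, hy⟩ := hPrime _ hφ₂m hhom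
  refine ⟨fun x => (φ (ρ x)).1, measurable_fst.comp (hφm.comp hρm), fun x₁ x₂ => ?_⟩
  constructor
  · intro h
    exact ((hφr (ρ x₁) (ρ x₂)).mp ((hρr x₁ x₂).mp h)).1
  · intro h
    exact (hρr x₁ x₂).mpr ((hφr (ρ x₁) (ρ x₂)).mpr
      ⟨h, hF.trans (hy x₁) (hF.symm (hy x₂))⟩)
end

section
/- Let E, F, F' be Borel equivalence relations on Polish spaces, with F and F' on the same space Y and F' ⊆ F (as subsets of Y×Y). If E is prime to F and E is prime to the restriction of F' to [y]_F for every y ∈ Y, then E is prime to F'. -/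
theorem stmt2 {X Y : Type*}
    [TopologicalSpace X] [PolishSpace X] [MeasurableSpace X] [BorelSpace X]
    [TopologicalSpace Y] [PolishSpace Y] [MeasurableSpace Y] [BorelSpace Y]
    (E : X → X → Prop) (F F' : Y → Y → Prop)
    (hE : Equivalence E) (hEb : MeasurableSet {p : X × X | E p.1 p.2})
    (hF : Equivalence F) (hFb : MeasurableSet {p : Y × Y | F p.1 p.2})
    (hF' : Equivalence F') (hF'b : MeasurableSet {p : Y × Y | F' p.1 p.2})
    (hSub : ∀ y₁ y₂, F' y₁ y₂ → F y₁ y₂)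
    (hPrime : PrimeTo E F)
    (hClasses : ∀ y : Y,
      PrimeTo E (fun (a b : {w : Y // F y w}) => F' a.1 b.1)) :
    PrimeTo E F' := by
  intro φ hφ hhom
  obtain ⟨ρ, hρm, hρr, y, hy⟩ := hPrime φ hφ (fun x₁ x₂ h => hSub _ _ (hhom x₁ x₂ h))
  set ψ : X → {w : Y // F y w} := fun x => ⟨φ (ρ x), hF.symm (hy x)⟩ with hψ
  have hψm : Measurable ψ := Measurable.subtype_mk (hφ.comp hρm)
  have hψh : Homomorphism E (fun (a b : {w : Y // F y w}) => F' a.1 b.1) ψ :=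
    fun x₁ x₂ h => hhom _ _ ((hρr x₁ x₂).mp h)
  obtain ⟨ρ', hρ'm, hρ'r, z, hz⟩ := hClasses y ψ hψm hψh
  refine ⟨ρ ∘ ρ', hρm.comp hρ'm, fun x₁ x₂ => (hρ'r x₁ x₂).trans (hρr _ _), z.1, hz⟩
end

section
/- Let E, F, F' be Borel equivalence relations. If E is prime to F and E is prime to F', then E is prime to the product F × F'. -/
theorem stmt3 {X Y Y' : Type*}
    [TopologicalSpace X] [PolishSpace X] [MeasurableSpace X] [BorelSpace X]
    [TopologicalSpace Y] [PolishSpace Y] [MeasurableSpace Y] [BorelSpace Y]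
    [TopologicalSpace Y'] [PolishSpace Y'] [MeasurableSpace Y'] [BorelSpace Y']
    (E : X → X → Prop) (F : Y → Y → Prop) (F' : Y' → Y' → Prop)
    (hE : Equivalence E) (hEb : MeasurableSet {p : X × X | E p.1 p.2})
    (hF : Equivalence F) (hFb : MeasurableSet {p : Y × Y | F p.1 p.2})
    (hF' : Equivalence F') (hF'b : MeasurableSet {p : Y' × Y' | F' p.1 p.2})
    (hPrimeF : PrimeTo E F) (hPrimeF' : PrimeTo E F') :
    PrimeTo E (fun p q : Y × Y' => F p.1 q.1 ∧ F' p.2 q.2) := by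
  intro φ hφ hhom
  obtain ⟨ρ₁, hρ₁m, hρ₁r, y, hy⟩ := hPrimeF (fun x => (φ x).1)
    (measurable_fst.comp hφ) (fun x₁ x₂ h => (hhom x₁ x₂ h).1)
  obtain ⟨ρ₂, hρ₂m, hρ₂r, y', hy'⟩ := hPrimeF' (fun x => (φ (ρ₁ x)).2)
    ((measurable_snd.comp hφ).comp hρ₁m)
    (fun x₁ x₂ h => (hhom _ _ ((hρ₁r x₁ x₂).mp h)).2)
  refine ⟨ρ₁ ∘ ρ₂, hρ₁m.comp hρ₂m, ?_, ⟨y, y'⟩, fun x => ⟨hy (ρ₂ x), hy' x⟩⟩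
  intro x₁ x₂
  exact (hρ₂r x₁ x₂).trans (hρ₁r _ _)
end

section
/- Let E, F, F' be Borel equivalence relations on the same Polish space Y. If E is prime to F and E is prime to F', then E is prime to the intersection F ∩ F'. -/
theorem stmt4 {X Y : Type*}
    [TopologicalSpace X] [PolishSpace X] [MeasurableSpace X] [BorelSpace X]
    [TopologicalSpace Y] [PolishSpace Y] [MeasurableSpace Y] [BorelSpace Y]
    (E : X → X → Prop) (F F' : Y → Y → Prop)
    (hE : Equivalence E) (hEb : MeasurableSet {p : X × X | E p.1 p.2})
    (hF : Equivalence F) (hFb : MeasurableSet {p : Y × Y | F p.1 p.2})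
    (hF' : Equivalence F') (hF'b : MeasurableSet {p : Y × Y | F' p.1 p.2})
    (hPrimeF : PrimeTo E F) (hPrimeF' : PrimeTo E F') :
    PrimeTo E (fun y₁ y₂ : Y => F y₁ y₂ ∧ F' y₁ y₂) := by
  intro φ hφm hφ
  obtain ⟨ρ, hρm, hρred, y, hy⟩ := hPrimeF φ hφm (fun x₁ x₂ h => (hφ x₁ x₂ h).1)
  have hcomp : Homomorphism E F' (φ ∘ ρ) := fun x₁ x₂ h =>
    (hφ _ _ ((hρred x₁ x₂).mp h)).2
  obtain ⟨ρ', hρ'm, hρ'red, y', hy'⟩ := hPrimeF' (φ ∘ ρ) (hφm.comp hρm) hcomp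
  refine ⟨ρ ∘ ρ', hρm.comp hρ'm, ?_, ?_⟩
  · intro x₁ x₂
    exact (hρ'red x₁ x₂).trans (hρred _ _)
  · by_cases hX : Nonempty X
    · obtain ⟨x₀⟩ := hX
      refine ⟨φ (ρ (ρ' x₀)), fun x => ⟨?_, ?_⟩⟩
      · exact hF.trans (hy (ρ' x)) (hF.symm (hy (ρ' x₀)))
      · exact hF'.trans (hy' x) (hF'.symm (hy' x₀))
    · exact ⟨y, fun x => absurd ⟨x⟩ hX⟩
end

section
/- Let E, F, F' be Borel equivalence relations. Suppose E is prime to F, E is prime to F', and E is prime to the equality relation Δ(2) on a two-point space. Then E is prime to the disjoint union F ⊔ F'. -/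
/-- The disjoint union of two equivalence relations. -/
def SumRel {Y Y' : Type*} (F : Y → Y → Prop) (F' : Y' → Y' → Prop) :
    Y ⊕ Y' → Y ⊕ Y' → Prop
  | Sum.inl a, Sum.inl b => F a b
  | Sum.inr a, Sum.inr b => F' a b
  | _, _ => False

lemma reduction_comp {X : Type*} {E : X → X → Prop} {ρ₀ ρ₁ : X → X}
    (h₀ : Reduction E E ρ₀) (h₁ : Reduction E E ρ₁) : Reduction E E (ρ₀ ∘ ρ₁) := by
  intro x₁ x₂
  exact (h₁ x₁ x₂).trans (h₀ (ρ₁ x₁) (ρ₁ x₂))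

theorem stmt5 {X Y Y' : Type*}
    [TopologicalSpace X] [PolishSpace X] [MeasurableSpace X] [BorelSpace X]
    [TopologicalSpace Y] [PolishSpace Y] [MeasurableSpace Y] [BorelSpace Y]
    [TopologicalSpace Y'] [PolishSpace Y'] [MeasurableSpace Y'] [BorelSpace Y']
    (E : X → X → Prop) (F : Y → Y → Prop) (F' : Y' → Y' → Prop)
    (hE : Equivalence E) (hEb : MeasurableSet {p : X × X | E p.1 p.2})
    (hF : Equivalence F) (hFb : MeasurableSet {p : Y × Y | F p.1 p.2})
    (hF' : Equivalence F') (hF'b : MeasurableSet {p : Y' × Y' | F' p.1 p.2})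
    (hPrimeF : PrimeTo E F) (hPrimeF' : PrimeTo E F')
    (hPrime2 : PrimeTo E (fun a b : Bool => a = b)) :
    PrimeTo E (SumRel F F') := by
  intro φ hφm hφh
  by_cases hX : Nonempty X
  · -- ψ : side indicator
    set ψ : X → Bool := fun x => (φ x).isLeft with hψ
    have hψm : Measurable ψ := by
      have : Measurable (Sum.isLeft : Y ⊕ Y' → Bool) :=
        (measurable_const (a := true)).sumElim (measurable_const (a := false))
      exact this.comp hφm
    have hψh : Homomorphism E (fun a b : Bool => a = b) ψ := by
      intro x₁ x₂ hx
      have := hφh x₁ x₂ hx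
      cases h1 : φ x₁ <;> cases h2 : φ x₂ <;> simp [hψ, h1, h2] <;>
        · rw [h1, h2] at this; exact this.elim
    obtain ⟨ρ₀, hρ₀m, hρ₀r, b, hb⟩ := hPrime2 ψ hψm hψh
    obtain ⟨x₀⟩ := hX
    cases b with
    | true =>
      -- all φ (ρ₀ x) are inl
      have hl : ∀ x, ∃ a, φ (ρ₀ x) = Sum.inl a := by
        intro x
        have := hb x
        cases h : φ (ρ₀ x) with
        | inl a => exact ⟨a, rfl⟩
        | inr a => simp [hψ, h] at this
      obtain ⟨y₀, hy₀⟩ := hl x₀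
      set g : Y ⊕ Y' → Y := Sum.elim id (fun _ => y₀) with hg
      have hgm : Measurable g := measurable_id.sumElim measurable_const
      set χ : X → Y := fun x => g (φ (ρ₀ x)) with hχ
      have hχm : Measurable χ := hgm.comp (hφm.comp hρ₀m)
      have hχh : Homomorphism E F χ := by
        intro x₁ x₂ hx
        have hx' := hφh _ _ ((hρ₀r x₁ x₂).mp hx)
        obtain ⟨a₁, h1⟩ := hl x₁
        obtain ⟨a₂, h2⟩ := hl x₂
        rw [h1, h2] at hx'
        simp [hχ, hg, h1, h2]
        exact hx'
      obtain ⟨ρ₁, hρ₁m, hρ₁r, y, hy⟩ := hPrimeF χ hχm hχh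
      refine ⟨ρ₀ ∘ ρ₁, hρ₀m.comp hρ₁m, reduction_comp hρ₀r hρ₁r, Sum.inl y, ?_⟩
      intro x
      obtain ⟨a, ha⟩ := hl (ρ₁ x)
      have := hy x
      simp only [hχ, hg, ha, Sum.elim_inl, id] at this
      show SumRel F F' (φ (ρ₀ (ρ₁ x))) (Sum.inl y)
      rw [ha]
      exact this
    | false =>
      have hl : ∀ x, ∃ a, φ (ρ₀ x) = Sum.inr a := by
        intro x
        have := hb x
        cases h : φ (ρ₀ x) with
        | inl a => simp [hψ, h] at this
        | inr a => exact ⟨a, rfl⟩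
      obtain ⟨y₀, hy₀⟩ := hl x₀
      set g : Y ⊕ Y' → Y' := Sum.elim (fun _ => y₀) id with hg
      have hgm : Measurable g := measurable_const.sumElim measurable_id
      set χ : X → Y' := fun x => g (φ (ρ₀ x)) with hχ
      have hχm : Measurable χ := hgm.comp (hφm.comp hρ₀m)
      have hχh : Homomorphism E F' χ := by
        intro x₁ x₂ hx
        have hx' := hφh _ _ ((hρ₀r x₁ x₂).mp hx)
        obtain ⟨a₁, h1⟩ := hl x₁
        obtain ⟨a₂, h2⟩ := hl x₂
        rw [h1, h2] at hx'
        simp [hχ, hg, h1, h2]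
        exact hx'
      obtain ⟨ρ₁, hρ₁m, hρ₁r, y, hy⟩ := hPrimeF' χ hχm hχh
      refine ⟨ρ₀ ∘ ρ₁, hρ₀m.comp hρ₁m, reduction_comp hρ₀r hρ₁r, Sum.inr y, ?_⟩
      intro x
      obtain ⟨a, ha⟩ := hl (ρ₁ x)
      have := hy x
      simp only [hχ, hg, ha, Sum.elim_inr, id] at this
      show SumRel F F' (φ (ρ₀ (ρ₁ x))) (Sum.inr y)
      rw [ha]
      exact this
  · -- X empty
    have hXe : IsEmpty X := not_nonempty_iff.mp hX
    obtain ⟨_, _, _, y, _⟩ :=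
      hPrimeF (fun x => hXe.elim x) (fun s _ => by
        have h : ((fun x => hXe.elim x : X → Y) ⁻¹' s) = ∅ := Set.eq_empty_of_isEmpty _
        rw [h]; exact MeasurableSet.empty)
        (fun x => hXe.elim x)
    exact ⟨id, measurable_id, fun x₁ x₂ => Iff.rfl, Sum.inl y, fun x => hXe.elim x⟩
end

section
/- A Borel equivalence relation E on a Polish space X (with at least two classes) is prime if and only if E is Borel reducible to every Borel equivalence relation F with E ⊆ F such that for every x ∈ X the restriction E↾[x]_F is strictly below E in Borel reducibility. -/
/-- A Borel equivalence relation is prime if it has at least two classes and is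
either reducible or prime to every Borel equivalence relation on a Polish space. -/
def IsPrime {X : Type} [MeasurableSpace X] (E : X → X → Prop) : Prop :=
  (∃ x y : X, ¬ E x y) ∧
  ∀ (Y : Type) [TopologicalSpace Y] [PolishSpace Y] [MeasurableSpace Y] [BorelSpace Y]
    (F : Y → Y → Prop), Equivalence F → MeasurableSet {p : Y × Y | F p.1 p.2} →
    BorelReducible E F ∨ PrimeTo E F

theorem stmt7 {X : Type}
    [TopologicalSpace X] [PolishSpace X] [MeasurableSpace X] [BorelSpace X]
    (E : X → X → Prop)
    (hE : Equivalence E) (hEb : MeasurableSet {p : X × X | E p.1 p.2})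
    (hTwo : ∃ x y : X, ¬ E x y) :
    IsPrime E ↔
      ∀ F : X → X → Prop, Equivalence F → MeasurableSet {p : X × X | F p.1 p.2} →
        (∀ x y, E x y → F x y) →
        (∀ x : X,
          BorelReducible (fun a b : {w : X // F x w} => E a.1 b.1) E ∧
          ¬ BorelReducible E (fun a b : {w : X // F x w} => E a.1 b.1)) →
        BorelReducible E F := by
  constructor
  · -- Forward: primeness gives the reducibility criterion
    intro hPrime F hF hFb hEF hRestr
    rcases hPrime.2 X F hF hFb with hred | hprime
    · exact hred
    · exfalso
      rcases hprime id measurable_id (fun x₁ x₂ h => hEF x₁ x₂ h) with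
        ⟨ρ, hρm, hρr, y, hy⟩
      exact (hRestr y).2 ⟨fun x => ⟨ρ x, hF.symm (hy x)⟩, hρm.subtype_mk,
        fun a b => hρr a b⟩
  · -- Backward
    intro h
    refine ⟨hTwo, ?_⟩
    intro Y _ _ _ _ F hF hFb
    by_cases hred : BorelReducible E F
    · exact Or.inl hred
    · refine Or.inr ?_
      intro φ hφ hφhom
      -- pullback relation
      set F' : X → X → Prop := fun a b => F (φ a) (φ b) with hF'def
      have hF' : Equivalence F' :=
        ⟨fun _ => hF.refl _, fun h => hF.symm h, fun h h' => hF.trans h h'⟩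
      have hF'b : MeasurableSet {p : X × X | F' p.1 p.2} := by
        have : {p : X × X | F' p.1 p.2} =
            (fun p : X × X => (φ p.1, φ p.2)) ⁻¹' {p : Y × Y | F p.1 p.2} := rfl
        rw [this]
        exact hFb.preimage ((hφ.comp measurable_fst).prodMk (hφ.comp measurable_snd))
      by_cases hcond : ∀ x : X,
          BorelReducible (fun a b : {w : X // F' x w} => E a.1 b.1) E ∧
          ¬ BorelReducible E (fun a b : {w : X // F' x w} => E a.1 b.1)
      · exfalso
        rcases h F' hF' hF'b (fun x y hxy => hφhom x y hxy) hcond with ⟨ψ, hψm, hψr⟩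
        exact hred ⟨fun a => φ (ψ a), hφ.comp hψm, fun a b => hψr a b⟩
      · push_neg at hcond
        rcases hcond with ⟨x, hx⟩
        have hA : BorelReducible (fun a b : {w : X // F' x w} => E a.1 b.1) E :=
          ⟨fun a => a.1, measurable_subtype_coe, fun _ _ => Iff.rfl⟩
        rcases hx hA with ⟨ψ, hψm, hψr⟩
        refine ⟨fun a => (ψ a).1, measurable_subtype_coe.comp hψm,
          fun a b => hψr a b, φ x, fun a => hF.symm (ψ a).2⟩
end

section
/- If E is a prime Borel equivalence relation, then for any two Borel equivalence relations F₁ and F₂ with E Borel reducible to the product F₁ × F₂, either E is Borel reducible to F₁ or E is Borel reducible to F₂. -/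
theorem stmt8 {X Y₁ Y₂ : Type}
    [TopologicalSpace X] [PolishSpace X] [MeasurableSpace X] [BorelSpace X]
    [TopologicalSpace Y₁] [PolishSpace Y₁] [MeasurableSpace Y₁] [BorelSpace Y₁]
    [TopologicalSpace Y₂] [PolishSpace Y₂] [MeasurableSpace Y₂] [BorelSpace Y₂]
    (E : X → X → Prop) (F₁ : Y₁ → Y₁ → Prop) (F₂ : Y₂ → Y₂ → Prop)
    (hE : Equivalence E) (hEb : MeasurableSet {p : X × X | E p.1 p.2})
    (hF₁ : Equivalence F₁) (hF₁b : MeasurableSet {p : Y₁ × Y₁ | F₁ p.1 p.2})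
    (hF₂ : Equivalence F₂) (hF₂b : MeasurableSet {p : Y₂ × Y₂ | F₂ p.1 p.2})
    (hPrime : IsPrime E)
    (hRed : BorelReducible E (fun p q : Y₁ × Y₂ => F₁ p.1 q.1 ∧ F₂ p.2 q.2)) :
    BorelReducible E F₁ ∨ BorelReducible E F₂ := by
  obtain ⟨φ, hφm, hφr⟩ := hRed
  rcases hPrime.2 Y₁ F₁ hF₁ hF₁b with h | h
  · exact Or.inl h
  · obtain ⟨ρ, hρm, hρr, y, hy⟩ :=
      h (fun x => (φ x).1) (measurable_fst.comp hφm)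
        (fun x₁ x₂ hx => ((hφr x₁ x₂).mp hx).1)
    refine Or.inr ⟨fun x => (φ (ρ x)).2, measurable_snd.comp (hφm.comp hρm), ?_⟩
    intro x₁ x₂
    constructor
    · intro hx
      exact ((hφr (ρ x₁) (ρ x₂)).mp ((hρr x₁ x₂).mp hx)).2
    · intro h2
      have h1 : F₁ (φ (ρ x₁)).1 (φ (ρ x₂)).1 :=
        hF₁.trans (hy x₁) (hF₁.symm (hy x₂))
      exact (hρr x₁ x₂).mpr ((hφr (ρ x₁) (ρ x₂)).mpr ⟨h1, h2⟩)
end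

section
/- Let F be an equivalence relation on X = (2^ω)^ω containing 𝔽₂ (equality of countable sets of reals), with F having the Baire property as a subset of X². If the set {(x,y,z) ∈ X³ : (x ⊕ y) F (x ⊕ z)} is non-meager (where x ⊕ y interleaves the sequences x and y), then F has a comeager equivalence class. -/
open Set

/-- Interleaving of two sequences: (x ⊕ y)(2k) = x(k), (x ⊕ y)(2k+1) = y(k). -/
def oplus {α : Type*} (x y : ℕ → α) : ℕ → α :=
  fun j => if j % 2 = 0 then x (j / 2) else y (j / 2)

abbrev XX : Type := ℕ → (ℕ → Bool)

open Filter Topology TopologicalSpace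

section Aux

lemma range_oplus {α : Type*} (x y : ℕ → α) :
    Set.range (oplus x y) = Set.range x ∪ Set.range y := by
  ext a
  constructor
  · rintro ⟨j, rfl⟩
    unfold oplus
    split_ifs
    · exact Or.inl ⟨j / 2, rfl⟩
    · exact Or.inr ⟨j / 2, rfl⟩
  · rintro (⟨k, rfl⟩ | ⟨k, rfl⟩)
    · exact ⟨2 * k, by simp [oplus, Nat.mul_div_cancel_left, Nat.mul_mod_right]⟩
    · refine ⟨2 * k + 1, ?_⟩
      have h1 : (2 * k + 1) % 2 = 1 := by omega
      have h2 : (2 * k + 1) / 2 = k := by omega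
      simp [oplus, h1, h2]

/-- the finite "block swap" permutation -/
def sig (n i : ℕ) : ℕ := if i < n then i + n else if i < 2 * n then i - n else i

lemma sig_invol (n i : ℕ) : sig n (sig n i) = i := by
  unfold sig; split_ifs <;> omega

lemma sig_surj (n : ℕ) : Function.Surjective (sig n) :=
  fun i => ⟨sig n i, sig_invol n i⟩

lemma sig_lt (n i : ℕ) (h : i < n) : sig n i = i + n := by unfold sig; rw [if_pos h]

lemma sig_add (n i : ℕ) (h : i < n) : sig n (i + n) = i := by
  unfold sig; split_ifs <;> omega

/-- coordinate-permutation homeomorphism of XX -/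
def Tn (n : ℕ) : XX ≃ₜ XX where
  toFun x := fun i => x (sig n i)
  invFun x := fun i => x (sig n i)
  left_inv x := by funext i; simp [sig_invol]
  right_inv x := by funext i; simp [sig_invol]
  continuous_toFun := continuous_pi fun i => continuous_apply (sig n i)
  continuous_invFun := continuous_pi fun i => continuous_apply (sig n i)

lemma range_Tn (n : ℕ) (x : XX) : Set.range (Tn n x) = Set.range x := by
  show Set.range (x ∘ sig n) = Set.range x
  exact (sig_surj n).range_comp x

lemma oplus_even {α : Type*} (x y : ℕ → α) (k : ℕ) : oplus x y (2 * k) = x k := by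
  have h1 : (2 * k) % 2 = 0 := by omega
  have h2 : (2 * k) / 2 = k := by omega
  simp [oplus, h1, h2]

lemma oplus_odd {α : Type*} (x y : ℕ → α) (k : ℕ) : oplus x y (2 * k + 1) = y k := by
  have h1 : (2 * k + 1) % 2 = 1 := by omega
  have h2 : (2 * k + 1) / 2 = k := by omega
  simp [oplus, h1, h2]

lemma continuous_oplus : Continuous fun p : XX × XX => oplus p.1 p.2 := by
  apply continuous_pi
  intro j
  show Continuous fun p : XX × XX => if j % 2 = 0 then p.1 (j / 2) else p.2 (j / 2)
  split_ifs
  · exact (continuous_apply _).comp continuous_fst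
  · exact (continuous_apply _).comp continuous_snd

/-- even/odd splitting homeomorphism -/
def eo : XX ≃ₜ XX × XX where
  toFun w := (fun k => w (2 * k), fun k => w (2 * k + 1))
  invFun p := oplus p.1 p.2
  left_inv w := by
    funext j
    show oplus _ _ j = w j
    unfold oplus
    split_ifs with h
    · have hj : 2 * (j / 2) = j := by omega
      show w (2 * (j / 2)) = w j
      rw [hj]
    · have hj : 2 * (j / 2) + 1 = j := by omega
      show w (2 * (j / 2) + 1) = w j
      rw [hj]
  right_inv p := by
    refine Prod.ext (funext fun k => ?_) (funext fun k => ?_)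
    · exact oplus_even p.1 p.2 k
    · exact oplus_odd p.1 p.2 k
  continuous_toFun := by
    apply Continuous.prodMk <;> exact continuous_pi fun k => continuous_apply _
  continuous_invFun := continuous_oplus

lemma oplus_eo (w : XX) : oplus (eo w).1 (eo w).2 = w := by
  have := eo.symm_apply_apply w
  exact this

/-- cyclic permutation homeomorphism of the triple product -/
def cyc : (XX × XX × XX) ≃ₜ (XX × XX × XX) where
  toFun t := (t.2.2, t.1, t.2.1)
  invFun t := (t.2.1, t.2.2, t.1)
  left_inv t := rfl
  right_inv t := rfl
  continuous_toFun := by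
    exact (continuous_snd.comp continuous_snd).prodMk
      (continuous_fst.prodMk (continuous_fst.comp continuous_snd))
  continuous_invFun := by
    exact (continuous_fst.comp continuous_snd).prodMk
      ((continuous_snd.comp continuous_snd).prodMk continuous_fst)

variable {α β : Type*} [TopologicalSpace α] [TopologicalSpace β]

lemma dense_sections_residual [SecondCountableTopology β] {U : Set (α × β)}
    (hU : IsOpen U) (hD : Dense U) :
    {x : α | Dense {y : β | (x, y) ∈ U}} ∈ residual α := by
  obtain ⟨B, hBc, -, hBb⟩ := exists_countable_basis β
  have key : ∀ b ∈ B, {x : α | b.Nonempty → ∃ y ∈ b, (x, y) ∈ U} ∈ residual α := by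
    intro b hb
    rcases eq_empty_or_nonempty b with rfl | hne
    · refine mem_of_superset univ_mem ?_
      intro x _
      simp
    · have hOopen : IsOpen {x : α | ∃ y ∈ b, (x, y) ∈ U} := by
        have : {x : α | ∃ y ∈ b, (x, y) ∈ U} = ⋃ y ∈ b, {x : α | (x, y) ∈ U} := by
          ext x; simp
        rw [this]
        exact isOpen_biUnion fun y _ => hU.preimage (Continuous.prodMk_left y)
      have hOdense : Dense {x : α | ∃ y ∈ b, (x, y) ∈ U} := by
        rw [dense_iff_inter_open]
        intro a ha hane
        have : (a ×ˢ b).Nonempty := hane.prod hne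
        obtain ⟨⟨x, y⟩, hxy, hxyU⟩ :=
          (dense_iff_inter_open.1 hD) (a ×ˢ b) (ha.prod (hBb.isOpen hb)) this
        exact ⟨x, hxy.1, y, hxy.2, hxyU⟩
      exact mem_of_superset (residual_of_dense_open hOopen hOdense) fun x hx _ => hx
  have hmem := (countable_bInter_mem hBc).2 key
  refine mem_of_superset hmem ?_
  intro x hx
  rw [mem_setOf_eq, hBb.dense_iff]
  intro o ho hone
  simp only [mem_iInter, mem_setOf_eq] at hx
  obtain ⟨y, hyb, hyU⟩ := hx o ho hone
  exact ⟨y, hyb, hyU⟩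

/-- easy direction of Kuratowski-Ulam -/
lemma ku [SecondCountableTopology β] {s : Set (α × β)} (hs : s ∈ residual (α × β)) :
    {x : α | {y : β | (x, y) ∈ s} ∈ residual β} ∈ residual α := by
  rw [mem_residual_iff] at hs
  obtain ⟨S, hSo, hSd, hSc, hSsub⟩ := hs
  have hmem := (countable_bInter_mem hSc).2
    (fun U hU => dense_sections_residual (hSo U hU) (hSd U hU))
  refine mem_of_superset hmem ?_
  intro x hx
  simp only [mem_iInter, mem_setOf_eq] at hx ⊢
  have h1 : (⋂ U ∈ S, {y : β | (x, y) ∈ U}) ∈ residual β := by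
    refine (countable_bInter_mem hSc).2 fun U hU => ?_
    exact residual_of_dense_open ((hSo U hU).preimage (Continuous.prodMk_right x)) (hx U hU)
  refine mem_of_superset h1 ?_
  intro y hy
  simp only [mem_iInter, mem_setOf_eq] at hy
  exact hSsub fun U hU => hy U hU

end Aux

theorem stmt10 (F : XX → XX → Prop)
    (hF : Equivalence F)
    (hBP : BaireMeasurableSet {p : XX × XX | F p.1 p.2})
    (hBP3 : BaireMeasurableSet {t : XX × XX × XX | F (oplus t.1 t.2.1) (oplus t.1 t.2.2)})
    (hSub : ∀ x y : XX, Set.range x = Set.range y → F x y)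
    (hNM : ¬ IsMeagre {t : XX × XX × XX | F (oplus t.1 t.2.1) (oplus t.1 t.2.2)}) :
    ∃ y : XX, {x : XX | F x y} ∈ residual XX := by
  classical
  set A : Set (XX × XX × XX) :=
    {t : XX × XX × XX | F (oplus t.1 t.2.1) (oplus t.1 t.2.2)} with hA_def
  have hswap : ∀ a b : XX, F (oplus a b) (oplus b a) := fun a b =>
    hSub _ _ (by rw [range_oplus, range_oplus, union_comm])
  -- Step 0: A has BP, so differs from an open set by meager
  obtain ⟨U, hUo, hAU⟩ := hBP3.residualEq_isOpen
  -- U is nonempty since A is nonmeager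
  have hUne : U.Nonempty := by
    rcases eq_empty_or_nonempty U with rfl | h
    · exfalso
      apply hNM
      show Aᶜ ∈ residual _
      filter_upwards [hAU] with p hp
      intro hpA
      exact cast hp hpA
    · exact h
  obtain ⟨q, hqU⟩ := hUne
  -- the group elements
  set Gn : ℕ → (XX × XX × XX) ≃ₜ (XX × XX × XX) :=
    fun n => (Tn n).prodCongr ((Tn n).prodCongr (Tn n)) with hGn_def
  have hInv : ∀ (n : ℕ) (t : XX × XX × XX), Gn n t ∈ A ↔ t ∈ A := by
    intro n t
    obtain ⟨x, y, z⟩ := t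
    have key : ∀ a b : XX, F (oplus (Tn n a) (Tn n b)) (oplus a b) := fun a b =>
      hSub _ _ (by rw [range_oplus, range_oplus, range_Tn, range_Tn])
    constructor
    · intro h
      exact hF.trans (hF.trans (hF.symm (key x y)) h) (key x z)
    · intro h
      exact hF.trans (hF.trans (key x y) h) (hF.symm (key x z))
  -- the open invariant saturation of U
  set V : Set (XX × XX × XX) := ⋃ n, (Gn n) ⁻¹' U with hV_def
  have hVo : IsOpen V := isOpen_iUnion fun n => hUo.preimage (Gn n).continuous
  -- V is dense
  have hVd : Dense V := by
    rw [dense_iff_inter_open]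
    intro o ho hone
    obtain ⟨p, hp⟩ := hone
    obtain ⟨p1, p2, p3⟩ := p
    obtain ⟨q1, q2, q3⟩ := q
    have ho' : o ∈ 𝓝 (p1, p2, p3) := ho.mem_nhds hp
    obtain ⟨w1, hw1, vv, hvv, hosub⟩ := mem_nhds_prod_iff.1 ho'
    obtain ⟨w2, hw2, w3, hw3, hvsub⟩ := mem_nhds_prod_iff.1 hvv
    have hU' : U ∈ 𝓝 (q1, q2, q3) := hUo.mem_nhds hqU
    obtain ⟨u1, hu1, uu, huu, hUsub⟩ := mem_nhds_prod_iff.1 hU'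
    obtain ⟨u2, hu2, u3, hu3, husub⟩ := mem_nhds_prod_iff.1 huu
    rw [nhds_pi] at hw1 hw2 hw3 hu1 hu2 hu3
    obtain ⟨I1, hI1f, t1, ht1, hI1⟩ := Filter.mem_pi.1 hw1
    obtain ⟨I2, hI2f, t2, ht2, hI2⟩ := Filter.mem_pi.1 hw2
    obtain ⟨I3, hI3f, t3, ht3, hI3⟩ := Filter.mem_pi.1 hw3
    obtain ⟨J1, hJ1f, s1, hs1, hJ1⟩ := Filter.mem_pi.1 hu1
    obtain ⟨J2, hJ2f, s2, hs2, hJ2⟩ := Filter.mem_pi.1 hu2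
    obtain ⟨J3, hJ3f, s3, hs3, hJ3⟩ := Filter.mem_pi.1 hu3
    obtain ⟨m, hm⟩ :=
      (((((hI1f.union hI2f).union hI3f).union hJ1f).union hJ2f).union hJ3f).bddAbove
    set N : ℕ := m + 1 with hN_def
    have hIb : ∀ i, (i ∈ I1 ∨ i ∈ I2 ∨ i ∈ I3 ∨ i ∈ J1 ∨ i ∈ J2 ∨ i ∈ J3) → i < N := by
      intro i hi
      have : i ≤ m := hm (by
        rcases hi with h | h | h | h | h | h <;>
          simp [Set.mem_union, h])
      omega
    set r1 : XX := fun i => if i < N then p1 i else q1 (sig N i) with hr1_def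
    set r2 : XX := fun i => if i < N then p2 i else q2 (sig N i) with hr2_def
    set r3 : XX := fun i => if i < N then p3 i else q3 (sig N i) with hr3_def
    have hrp : ∀ (r : XX) (p' : XX) (q' : XX) (I : Set ℕ) (t : ∀ _ : ℕ, Set (ℕ → Bool)),
        (r = fun i => if i < N then p' i else q' (sig N i)) →
        (∀ i, t i ∈ 𝓝 (p' i)) → (∀ i ∈ I, i < N) → r ∈ I.pi t := by
      intro r p' q' I t hr ht hI
      intro i hi
      have hiN := hI i hi
      rw [hr]
      simp only [if_pos hiN]
      exact mem_of_mem_nhds (ht i)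
    have hrq : ∀ (r : XX) (p' : XX) (q' : XX) (J : Set ℕ) (s : ∀ _ : ℕ, Set (ℕ → Bool)),
        (r = fun i => if i < N then p' i else q' (sig N i)) →
        (∀ i, s i ∈ 𝓝 (q' i)) → (∀ i ∈ J, i < N) → (fun i => r (sig N i)) ∈ J.pi s := by
      intro r p' q' J s hr hs hJ
      intro i hi
      have hiN := hJ i hi
      have h1 : sig N i = i + N := sig_lt N i hiN
      have h2 : ¬ (i + N < N) := by omega
      have h3 : sig N (i + N) = i := sig_add N i hiN
      simp only [h1]
      rw [hr]
      simp only [if_neg h2, h3]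
      exact mem_of_mem_nhds (hs i)
    refine ⟨(r1, r2, r3), ?_, ?_⟩
    · -- in o
      apply hosub
      refine ⟨?_, hvsub ⟨?_, ?_⟩⟩
      · exact hI1 (hrp r1 p1 q1 I1 t1 hr1_def ht1 fun i hi => hIb i (Or.inl hi))
      · exact hI2 (hrp r2 p2 q2 I2 t2 hr2_def ht2 fun i hi => hIb i (Or.inr (Or.inl hi)))
      · exact hI3 (hrp r3 p3 q3 I3 t3 hr3_def ht3 fun i hi => hIb i (Or.inr (Or.inr (Or.inl hi))))
    · -- in V
      refine mem_iUnion.2 ⟨N, ?_⟩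
      show Gn N (r1, r2, r3) ∈ U
      apply hUsub
      refine ⟨?_, husub ⟨?_, ?_⟩⟩
      · exact hJ1 (hrq r1 p1 q1 J1 s1 hr1_def hs1
          fun i hi => hIb i (Or.inr (Or.inr (Or.inr (Or.inl hi)))))
      · exact hJ2 (hrq r2 p2 q2 J2 s2 hr2_def hs2
          fun i hi => hIb i (Or.inr (Or.inr (Or.inr (Or.inr (Or.inl hi))))))
      · exact hJ3 (hrq r3 p3 q3 J3 s3 hr3_def hs3
          fun i hi => hIb i (Or.inr (Or.inr (Or.inr (Or.inr (Or.inr hi))))))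
  -- A is residual
  have hAres : A ∈ residual (XX × XX × XX) := by
    have hEn : ∀ n : ℕ, {p : XX × XX × XX | p ∈ A ↔ p ∈ (Gn n) ⁻¹' U} ∈ residual _ := by
      intro n
      have htd := tendsto_residual_of_isOpenMap (Gn n).continuous (Gn n).isOpenMap
      filter_upwards [htd.eventually hAU] with p hp
      have h1 : Gn n p ∈ A ↔ Gn n p ∈ U := iff_of_eq hp
      exact (hInv n p).symm.trans h1
    have hE := countable_iInter_mem.2 hEn
    have hVres := residual_of_dense_open hVo hVd
    refine mem_of_superset (inter_mem hVres hE) ?_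
    rintro p ⟨hpV, hpE⟩
    simp only [mem_iInter, mem_setOf_eq] at hpE
    obtain ⟨n, hn⟩ := mem_iUnion.1 hpV
    exact (hpE n).2 hn
  -- Kuratowski-Ulam applications
  have hA1 : (Homeomorph.prodAssoc XX XX XX) ⁻¹' A ∈ residual ((XX × XX) × XX) :=
    tendsto_residual_of_isOpenMap (Homeomorph.prodAssoc XX XX XX).continuous
      (Homeomorph.prodAssoc XX XX XX).isOpenMap hAres
  have hG1 : {xy : XX × XX | {z : XX | F (oplus xy.1 xy.2) (oplus xy.1 z)} ∈ residual XX}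
      ∈ residual (XX × XX) := by
    have := ku hA1
    refine mem_of_superset this ?_
    intro xy hxy
    exact hxy
  -- the "reversed" set A'
  have hA' : {t : XX × XX × XX | F (oplus t.1 t.2.2) (oplus t.2.1 t.2.2)}
      ∈ residual (XX × XX × XX) := by
    have hcyc : cyc ⁻¹' A ∈ residual (XX × XX × XX) :=
      tendsto_residual_of_isOpenMap cyc.continuous cyc.isOpenMap hAres
    have heq : {t : XX × XX × XX | F (oplus t.1 t.2.2) (oplus t.2.1 t.2.2)} = cyc ⁻¹' A := by
      ext ⟨y, z, u⟩
      show F (oplus y u) (oplus z u) ↔ F (oplus u y) (oplus u z)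
      constructor
      · intro h
        exact hF.trans (hF.trans (hswap u y) h) (hswap z u)
      · intro h
        exact hF.trans (hF.trans (hswap y u) h) (hswap u z)
    rw [heq]
    exact hcyc
  have hA2 : (Homeomorph.prodAssoc XX XX XX) ⁻¹'
      {t : XX × XX × XX | F (oplus t.1 t.2.2) (oplus t.2.1 t.2.2)}
      ∈ residual ((XX × XX) × XX) :=
    tendsto_residual_of_isOpenMap (Homeomorph.prodAssoc XX XX XX).continuous
      (Homeomorph.prodAssoc XX XX XX).isOpenMap hA'
  have hG2 : {yz : XX × XX | {u : XX | F (oplus yz.1 u) (oplus yz.2 u)} ∈ residual XX}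
      ∈ residual (XX × XX) := by
    have := ku hA2
    refine mem_of_superset this ?_
    intro yz hyz
    exact hyz
  -- the doubled set
  have hR1 : (Prod.fst : (XX × XX) × (XX × XX) → XX × XX) ⁻¹'
      {xy : XX × XX | {z : XX | F (oplus xy.1 xy.2) (oplus xy.1 z)} ∈ residual XX}
      ∈ residual ((XX × XX) × (XX × XX)) :=
    tendsto_residual_of_isOpenMap continuous_fst isOpenMap_fst hG1
  have hR2 : (Prod.snd : (XX × XX) × (XX × XX) → XX × XX) ⁻¹'
      {xy : XX × XX | {z : XX | F (oplus xy.1 xy.2) (oplus xy.1 z)} ∈ residual XX}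
      ∈ residual ((XX × XX) × (XX × XX)) :=
    tendsto_residual_of_isOpenMap continuous_snd isOpenMap_snd hG1
  have hR3 : (Prod.map (Prod.fst : XX × XX → XX) (Prod.fst : XX × XX → XX)) ⁻¹'
      {yz : XX × XX | {u : XX | F (oplus yz.1 u) (oplus yz.2 u)} ∈ residual XX}
      ∈ residual ((XX × XX) × (XX × XX)) :=
    tendsto_residual_of_isOpenMap (continuous_fst.prodMap continuous_fst)
      (isOpenMap_fst.prodMap isOpenMap_fst) hG2
  have hDt : {pq : (XX × XX) × (XX × XX) | F (oplus pq.1.1 pq.1.2) (oplus pq.2.1 pq.2.2)}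
      ∈ residual ((XX × XX) × (XX × XX)) := by
    refine mem_of_superset (inter_mem (inter_mem hR1 hR2) hR3) ?_
    rintro ⟨⟨x, y⟩, ⟨x', y'⟩⟩ ⟨⟨h1, h2⟩, h3⟩
    simp only [mem_preimage, mem_setOf_eq] at h1 h2 h3
    have hint := inter_mem (inter_mem h1 h2) h3
    obtain ⟨u, ⟨hu1, hu2⟩, hu3⟩ := (dense_of_mem_residual hint).nonempty
    exact hF.trans (hF.trans hu1 hu3) (hF.symm hu2)
  -- transfer to X × X
  have hD : {p : XX × XX | F p.1 p.2} ∈ residual (XX × XX) := by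
    set Φ : (XX × XX) ≃ₜ (XX × XX) × (XX × XX) := eo.prodCongr eo with hΦ_def
    have hpre : Φ ⁻¹'
        {pq : (XX × XX) × (XX × XX) | F (oplus pq.1.1 pq.1.2) (oplus pq.2.1 pq.2.2)}
        = {p : XX × XX | F p.1 p.2} := by
      ext ⟨w, w'⟩
      show F (oplus (eo w).1 (eo w).2) (oplus (eo w').1 (eo w').2) ↔ F w w'
      rw [oplus_eo, oplus_eo]
    rw [← hpre]
    exact tendsto_residual_of_isOpenMap Φ.continuous Φ.isOpenMap hDt
  -- conclusion
  have hfinal := ku hD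
  obtain ⟨y0, hy0⟩ := (dense_of_mem_residual hfinal).nonempty
  refine ⟨y0, ?_⟩
  have : {x : XX | F x y0} = {w : XX | F y0 w} := by
    ext x
    exact ⟨fun h => hF.symm h, fun h => hF.symm h⟩
  rw [this]
  exact hy0
end

section
/- Define a partition of triples of distinct elements of 2^ω (identified with x <_lex y <_lex z) into P₀ = {(x,y,z) : Δ(x,y) ≤ Δ(y,z)} and P₁ = {(x,y,z) : Δ(x,y) > Δ(y,z)}, where Δ(u,v) is the least n with u(n) ≠ v(n). Then both pieces are clopen in the space of such triples, and there is no perfect subset K of 2^ω such that all triples from K lie in a single piece. -/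
/-- The lexicographic (strict) order on `2^ω`. -/
def lexLT (x y : ℕ → Bool) : Prop :=
  ∃ n, (∀ m < n, x m = y m) ∧ x n < y n

/-- The least coordinate at which two elements of `2^ω` differ. -/
noncomputable def delta (x y : ℕ → Bool) : ℕ :=
  sInf {n | x n ≠ y n}

/-- The space of lexicographically increasing triples from `2^ω`. -/
def Triples : Type :=
  {t : (ℕ → Bool) × (ℕ → Bool) × (ℕ → Bool) // lexLT t.1 t.2.1 ∧ lexLT t.2.1 t.2.2}

instance : TopologicalSpace Triples :=
  instTopologicalSpaceSubtype

/-- The piece `P₀`: triples with `Δ(x,y) ≤ Δ(y,z)`; `P₁` is its complement. -/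
def Pzero : Set Triples :=
  {t | delta t.1.1 t.1.2.1 ≤ delta t.1.2.1 t.1.2.2}

namespace Stmt13Aux

lemma delta_mem {x y : ℕ → Bool} (h : x ≠ y) : x (delta x y) ≠ y (delta x y) :=
  Nat.sInf_mem (Function.ne_iff.mp h)

lemma delta_agree {x y : ℕ → Bool} {m : ℕ} (h : m < delta x y) : x m = y m := by
  by_contra hc
  exact absurd (Nat.sInf_le hc) (not_le.mpr h)

lemma delta_eq {x y : ℕ → Bool} {n : ℕ} (hag : ∀ m < n, x m = y m) (hne : x n ≠ y n) :
    delta x y = n := by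
  have h1 : delta x y ≤ n := Nat.sInf_le hne
  rcases lt_or_eq_of_le h1 with h | h
  · exact absurd (hag _ h) (Nat.sInf_mem (⟨n, hne⟩ : {k | x k ≠ y k}.Nonempty))
  · exact h

lemma delta_comm (x y : ℕ → Bool) : delta x y = delta y x := by
  unfold delta
  congr 1
  ext n
  exact ne_comm

lemma Bool_lt {a b : Bool} (h : a < b) : a = false ∧ b = true := by
  cases a <;> cases b <;> simp_all [Bool.lt_iff]

lemma lexLT_spec {x y : ℕ → Bool} (h : lexLT x y) :
    (∀ m < delta x y, x m = y m) ∧ x (delta x y) = false ∧ y (delta x y) = true := by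
  obtain ⟨n, hag, hlt⟩ := h
  obtain ⟨hx, hy⟩ := Bool_lt hlt
  have hne : x n ≠ y n := by rw [hx, hy]; simp
  rw [delta_eq hag hne]
  exact ⟨hag, hx, hy⟩

lemma lexLT_ne {x y : ℕ → Bool} (h : lexLT x y) : x ≠ y := by
  obtain ⟨n, -, hlt⟩ := h
  exact fun he => absurd (congrFun he n) (ne_of_lt hlt)

lemma lexLT_total {x y : ℕ → Bool} (h : x ≠ y) : lexLT x y ∨ lexLT y x := by
  have hne := delta_mem h
  rcases hne.lt_or_gt with h1 | h1
  · exact Or.inl ⟨delta x y, fun m hm => delta_agree hm, h1⟩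
  · exact Or.inr ⟨delta x y, fun m hm => (delta_agree hm).symm, h1⟩

lemma isOpen_cyl (x : ℕ → Bool) (N : ℕ) :
    IsOpen {z : ℕ → Bool | ∀ m ≤ N, z m = x m} := by
  have he : {z : ℕ → Bool | ∀ m ≤ N, z m = x m} =
      ⋂ m ∈ Finset.range (N + 1), {z : ℕ → Bool | z m = x m} := by
    ext z; simp [Nat.lt_succ_iff]
  rw [he]
  refine isOpen_biInter_finset fun m _ => ?_
  have : {z : ℕ → Bool | z m = x m} = (fun z : ℕ → Bool => z m) ⁻¹' {x m} := rfl
  rw [this]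
  exact (continuous_apply m).isOpen_preimage _ (isOpen_discrete _)

lemma delta_stable {x y x' y' : ℕ → Bool} (h : x ≠ y)
    (hx : ∀ m ≤ delta x y, x' m = x m) (hy : ∀ m ≤ delta x y, y' m = y m) :
    delta x' y' = delta x y := by
  apply delta_eq
  · intro m hm
    rw [hx m hm.le, hy m hm.le]
    exact delta_agree hm
  · rw [hx _ le_rfl, hy _ le_rfl]
    exact delta_mem h

noncomputable def f (t : Triples) : ℕ × ℕ :=
  (delta t.1.1 t.1.2.1, delta t.1.2.1 t.1.2.2)

lemma f_locConst : IsLocallyConstant f := by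
  rw [IsLocallyConstant.iff_exists_open]
  rintro ⟨⟨x, y, z⟩, hxy, hyz⟩
  have hxyne := lexLT_ne hxy
  have hyzne := lexLT_ne hyz
  set N := max (delta x y) (delta y z) with hN
  refine ⟨{t' : Triples | (∀ m ≤ N, t'.1.1 m = x m) ∧ (∀ m ≤ N, t'.1.2.1 m = y m) ∧
      (∀ m ≤ N, t'.1.2.2 m = z m)}, ?_, ?_, ?_⟩
  · have c1 : Continuous fun t' : Triples => t'.1.1 :=
      continuous_fst.comp continuous_subtype_val
    have c2 : Continuous fun t' : Triples => t'.1.2.1 :=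
      continuous_fst.comp (continuous_snd.comp continuous_subtype_val)
    have c3 : Continuous fun t' : Triples => t'.1.2.2 :=
      continuous_snd.comp (continuous_snd.comp continuous_subtype_val)
    exact ((isOpen_cyl x N).preimage c1).inter
      (((isOpen_cyl y N).preimage c2).inter ((isOpen_cyl z N).preimage c3))
  · exact ⟨fun m _ => rfl, fun m _ => rfl, fun m _ => rfl⟩
  · rintro ⟨⟨x', y', z'⟩, h1, h2⟩ ⟨ha, hb, hc⟩
    have e1 : delta x' y' = delta x y :=
      delta_stable hxyne (fun m hm => ha m (hm.trans (le_max_left _ _)))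
        (fun m hm => hb m (hm.trans (le_max_left _ _)))
    have e2 : delta y' z' = delta y z :=
      delta_stable hyzne (fun m hm => hb m (hm.trans (le_max_right _ _)))
        (fun m hm => hc m (hm.trans (le_max_right _ _)))
    show (delta x' y', delta y' z') = (delta x y, delta y z)
    rw [e1, e2]

lemma perfect_step {K : Set (ℕ → Bool)} (hK : Perfect K) {q : ℕ → Bool}
    (hq : q ∈ K) (N : ℕ) : ∃ q' ∈ K, q' ≠ q ∧ ∀ m ≤ N, q' m = q m := by
  have hacc := hK.acc q hq
  rw [accPt_iff_nhds] at hacc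
  obtain ⟨q', ⟨hq'U, hq'K⟩, hne⟩ :=
    hacc _ ((isOpen_cyl q N).mem_nhds (by intro m _; rfl))
  exact ⟨q', hq'K, hne, hq'U⟩

end Stmt13Aux

open Stmt13Aux in
theorem stmt13 :
    IsClopen Pzero ∧ IsClopen Pzeroᶜ ∧
    ¬ ∃ K : Set (ℕ → Bool), Perfect K ∧ K.Nonempty ∧
      ((∀ x ∈ K, ∀ y ∈ K, ∀ z ∈ K, lexLT x y → lexLT y z →
          delta x y ≤ delta y z) ∨
       (∀ x ∈ K, ∀ y ∈ K, ∀ z ∈ K, lexLT x y → lexLT y z →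
          delta x y > delta y z)) := by
  have hopen : IsOpen Pzero := f_locConst {p : ℕ × ℕ | p.1 ≤ p.2}
  have hopenc : IsOpen Pzeroᶜ := f_locConst {p : ℕ × ℕ | p.1 ≤ p.2}ᶜ
  refine ⟨⟨isOpen_compl_iff.mp hopenc, hopen⟩, ⟨hopen.isClosed_compl, hopenc⟩, ?_⟩
  rintro ⟨K, hK, ⟨p0, hp0⟩, hhom⟩
  obtain ⟨q0, hq0K, hq0ne, -⟩ := perfect_step hK hp0 0
  obtain ⟨p, hpK, q, hqK, hpq⟩ : ∃ p ∈ K, ∃ q ∈ K, lexLT p q := by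
    rcases lexLT_total hq0ne with h | h
    · exact ⟨q0, hq0K, p0, hp0, h⟩
    · exact ⟨p0, hp0, q0, hq0K, h⟩
  set d := delta p q with hd
  obtain ⟨hag, hpf, hqt⟩ := lexLT_spec hpq
  rcases hhom with h | h
  · -- P₀-homogeneous: find a triple in P₁
    obtain ⟨p', hp'K, hp'ne, hp'ag⟩ := perfect_step hK hpK d
    have hdd : d < delta p p' := by
      by_contra hle
      push_neg at hle
      exact delta_mem (fun he => hp'ne he.symm) (hp'ag _ hle).symm
    rcases lexLT_total hp'ne with h1 | h1
    · -- p' < p < q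
      have := h p' hp'K p hpK q hqK h1 hpq
      rw [delta_comm p' p, ← hd] at this
      exact absurd this (not_le.mpr hdd)
    · -- p < p' < q
      have hp'q : lexLT p' q := by
        refine ⟨d, fun m hm => ?_, ?_⟩
        · rw [hp'ag m hm.le]; exact hag m hm
        · rw [hp'ag d le_rfl, hpf, hqt]; simp
      have := h p hpK p' hp'K q hqK h1 hp'q
      have hdp'q : delta p' q = d := by
        apply delta_eq
        · intro m hm; rw [hp'ag m hm.le]; exact hag m hm
        · rw [hp'ag d le_rfl, hpf, hqt]; simp
      rw [hdp'q] at this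
      exact absurd this (not_le.mpr hdd)
  · -- P₁-homogeneous: find a triple in P₀
    obtain ⟨q', hq'K, hq'ne, hq'ag⟩ := perfect_step hK hqK d
    have hdd : d < delta q q' := by
      by_contra hle
      push_neg at hle
      exact delta_mem (fun he => hq'ne he.symm) (hq'ag _ hle).symm
    rcases lexLT_total (fun he => hq'ne he.symm : q ≠ q') with h1 | h1
    · -- p < q < q'
      have := h p hpK q hqK q' hq'K hpq h1
      rw [← hd] at this
      exact absurd this (not_lt.mpr (le_of_lt hdd))
    · -- p < q' < q
      have hpq' : lexLT p q' := by
        refine ⟨d, fun m hm => ?_, ?_⟩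
        · rw [hq'ag m hm.le]; exact hag m hm
        · rw [hq'ag d le_rfl, hpf, hqt]; simp
      have := h p hpK q' hq'K q hqK hpq' h1
      have hdpq' : delta p q' = d := by
        apply delta_eq
        · intro m hm; rw [hq'ag m hm.le]; exact hag m hm
        · rw [hq'ag d le_rfl, hpf, hqt]; simp
      rw [hdpq'] at this
      have hcomm : delta q' q = delta q q' := delta_comm _ _
      omega
end

section
/- For every Borel homomorphism F from 𝔽₂ to 𝔽₂ (on ℝ^ω, mapping countable sets of reals to countable sets of reals in an 𝔽₂-invariant way), there exists x ∈ ℝ^ω such that the countable set enumerated by F(x) is contained in the countable set enumerated by x. -/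
/-!
Take finite sequences of reals as Cohen conditions, the reals being treated as discrete. Every Borel
set `B ⊆ ℝ^ω` has the Baire property in this setting: along any sequence meeting countably many
dense sets attached to `B`, membership in `B` is decided by an initial segment.

Close `{0}` under countably many Skolem functions to get a countable set `A`: witnesses for all these
dense sets; for every pair of coordinates `m, m'` and conditions `s, t` over `A`, extensions which
either force `F(y)ₘ` and `F(z)ₘ'` into disjoint rational intervals or force them to be equal; and
the value forced in the latter case, which is unique. A Rasiowa–Sikorski argument inside `A` gives
two generic enumerations `y, z` of `A` whose initial segments decide every pair `m, m'`. Since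
`y 𝔽₂ z`, each `F(y)ₙ` equals some `F(z)ₘ'`; this pair cannot be forced apart, so `F(y)ₙ` is the
value forced by the deciding segments, and hence lies in `A = range y`.
-/

open Set

namespace F2Homomorphism

variable {α : Type*}

def pref (y : ℕ → α) (k : ℕ) : List α := List.ofFn fun i : Fin k => y i

@[simp] lemma length_pref (y : ℕ → α) (k : ℕ) : (pref y k).length = k := List.length_ofFn

@[simp] lemma getElem_pref (y : ℕ → α) (k i : ℕ) (h : i < (pref y k).length) :
    (pref y k)[i] = y i := by
  simp [pref]

lemma pref_prefix_pref (y : ℕ → α) {a b : ℕ} (h : a ≤ b) : pref y a <+: pref y b := by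
  rw [List.prefix_iff_eq_take]
  apply List.ext_getElem <;> simp [h]

def cyl (s : List α) : Set (ℕ → α) := {y | ∀ i (h : i < s.length), y i = s[i]}

lemma mem_cyl_pref (y : ℕ → α) (k : ℕ) : y ∈ cyl (pref y k) :=
  fun i h => (getElem_pref y k i h).symm

lemma pref_length_eq_of_mem_cyl {y : ℕ → α} {s : List α} (hs : y ∈ cyl s) :
    pref y s.length = s :=
  List.ext_getElem (length_pref y _) fun i _ h => by rw [getElem_pref, hs i h]

lemma cyl_anti {s t : List α} (h : s <+: t) : cyl t ⊆ cyl s := fun y hy i hi => by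
  rw [h.getElem hi]
  exact hy i (hi.trans_le h.length_le)

lemma prefix_or_prefix_of_mem_cyl {y : ℕ → α} {s t : List α} (hs : y ∈ cyl s)
    (ht : y ∈ cyl t) : s <+: t ∨ t <+: s := by
  rw [← pref_length_eq_of_mem_cyl hs, ← pref_length_eq_of_mem_cyl ht]
  exact (le_total _ _).imp (pref_prefix_pref y) (pref_prefix_pref y)

lemma mem_range_of_mem_cyl {y : ℕ → α} {s : List α} (hs : y ∈ cyl s) {x : α} (hx : x ∈ s) :
    x ∈ range y := by
  obtain ⟨i, hi, rfl⟩ := List.getElem_of_mem hx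
  exact ⟨i, hs i hi⟩

lemma exists_cyl_pref_subset_of_isOpen [TopologicalSpace α] {U : Set (ℕ → α)} (hU : IsOpen U)
    {y : ℕ → α} (hy : y ∈ U) : ∃ k, cyl (pref y k) ⊆ U := by
  obtain ⟨I, u, hu, hIU⟩ := isOpen_pi_iff.mp hU y hy
  refine ⟨I.sup id + 1, fun z hz => hIU fun i hi => ?_⟩
  have hlt : i < (pref y (I.sup id + 1)).length := by
    simpa [Nat.lt_succ_iff] using Finset.le_sup (f := id) hi
  rw [Finset.mem_coe] at hi
  simpa [hz i hlt] using (hu i hi).2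

lemma exists_range_eq_of_chain {A : Set α} {l : ℕ → List α}
    (hmono : ∀ i j, i ≤ j → l i <+: l j) (hsub : ∀ i, ∀ x ∈ l i, x ∈ A)
    (hcover : ∀ a ∈ A, ∃ i, a ∈ l i) (hlen : ∀ k, ∃ i, k < (l i).length) :
    ∃ y : ℕ → α, range y = A ∧ ∀ i, y ∈ cyl (l i) := by
  choose idx hidx using hlen
  have hcyl : ∀ i, (fun k => (l (idx k))[k]'(hidx k)) ∈ cyl (l i) := by
    intro i k hk
    rcases le_total i (idx k) with h | h
    · exact ((hmono _ _ h).getElem hk).symm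
    · exact (hmono _ _ h).getElem (hidx k)
  refine ⟨_, subset_antisymm ?_ fun a ha => ?_, hcyl⟩
  · rintro _ ⟨k, rfl⟩
    exact hsub _ _ (List.getElem_mem _)
  · obtain ⟨i, hi⟩ := hcover a ha
    exact mem_range_of_mem_cyl (hcyl i) hi

/-- Conditions are finite sequences of exact values, as in Cohen forcing over a discrete `α`; the
forcing relations need only be truthful along sequences meeting every `dense n`. -/
structure Forcing (B : Set (ℕ → α)) where
  ForcesMem : List α → Prop
  ForcesNotMem : List α → Prop
  dense : ℕ → Set (List α)
  forcesMem_mono {s t : List α} : s <+: t → ForcesMem s → ForcesMem t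
  forcesNotMem_mono {s t : List α} : s <+: t → ForcesNotMem s → ForcesNotMem t
  exists_mem_dense (n : ℕ) (s : List α) : ∃ t ∈ dense n, s <+: t
  decides (y : ℕ → α) : (∀ n, ∃ s ∈ dense n, y ∈ cyl s) →
    ∃ s, y ∈ cyl s ∧ (ForcesMem s ∨ ForcesNotMem s)
  mem_of_forcesMem (y : ℕ → α) (s : List α) : (∀ n, ∃ s ∈ dense n, y ∈ cyl s) →
    y ∈ cyl s → ForcesMem s → y ∈ B
  not_mem_of_forcesNotMem (y : ℕ → α) (s : List α) : (∀ n, ∃ s ∈ dense n, y ∈ cyl s) →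
    y ∈ cyl s → ForcesNotMem s → y ∉ B

namespace Forcing

variable {B : Set (ℕ → α)}

def IsGeneric (M : Forcing B) (y : ℕ → α) : Prop := ∀ n, ∃ s ∈ M.dense n, y ∈ cyl s

lemma exists_forcesMem {M : Forcing B} {y : ℕ → α} (hg : M.IsGeneric y) (hy : y ∈ B)
    {s : List α} (hs : y ∈ cyl s) : ∃ t, s <+: t ∧ y ∈ cyl t ∧ M.ForcesMem t := by
  obtain ⟨t, ht, hpos | hneg⟩ := M.decides y hg
  · rcases prefix_or_prefix_of_mem_cyl hs ht with hst | hts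
    · exact ⟨t, hst, ht, hpos⟩
    · exact ⟨s, List.prefix_refl s, hs, M.forcesMem_mono hts hpos⟩
  · exact absurd hy (M.not_mem_of_forcesNotMem y t hg ht hneg)

def ofIsOpen [TopologicalSpace α] {U : Set (ℕ → α)} (hU : IsOpen U) : Forcing U where
  ForcesMem s := cyl s ⊆ U
  ForcesNotMem s := Disjoint (cyl s) U
  dense _ := {s | cyl s ⊆ U ∨ Disjoint (cyl s) U}
  forcesMem_mono h hs := (cyl_anti h).trans hs
  forcesNotMem_mono h hs := hs.mono_left (cyl_anti h)
  exists_mem_dense _ s := by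
    by_cases h : Disjoint (cyl s) U
    · exact ⟨s, Or.inr h, List.prefix_refl s⟩
    obtain ⟨y, hys, hyU⟩ := not_disjoint_iff.mp h
    obtain ⟨k, hk⟩ := exists_cyl_pref_subset_of_isOpen hU hyU
    rcases prefix_or_prefix_of_mem_cyl hys (mem_cyl_pref y k) with h' | h'
    · exact ⟨pref y k, Or.inl hk, h'⟩
    · exact ⟨s, Or.inl ((cyl_anti h').trans hk), List.prefix_refl s⟩
  decides y hy := (hy 0).imp fun _ ⟨hs, hys⟩ => ⟨hys, hs⟩
  mem_of_forcesMem _ _ _ hys hs := hs hys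
  not_mem_of_forcesNotMem _ _ _ hys hs hyU := disjoint_left.mp hs hys hyU

def compl (M : Forcing B) : Forcing Bᶜ where
  ForcesMem := M.ForcesNotMem
  ForcesNotMem := M.ForcesMem
  dense := M.dense
  forcesMem_mono := M.forcesNotMem_mono
  forcesNotMem_mono := M.forcesMem_mono
  exists_mem_dense := M.exists_mem_dense
  decides y hy := (M.decides y hy).imp fun _ ⟨hys, h⟩ => ⟨hys, h.symm⟩
  mem_of_forcesMem := M.not_mem_of_forcesNotMem
  not_mem_of_forcesNotMem y s hy hys h := not_not_intro (M.mem_of_forcesMem y s hy hys h)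

section iUnion

variable {B : ℕ → Set (ℕ → α)} (M : ∀ k, Forcing (B k))

/-- The first dense set makes generic sequences decide the union; the others interleave the dense
sets of all the `M k`. -/
def iUnionDense : ℕ → Set (List α)
  | 0 => {s | (∃ k, (M k).ForcesMem s) ∨ ∀ k t, s <+: t → ¬(M k).ForcesMem t}
  | n + 1 => (M n.unpair.1).dense n.unpair.2

lemma isGeneric_of_iUnionDense {y : ℕ → α} (hy : ∀ n, ∃ s ∈ iUnionDense M n, y ∈ cyl s)
    (k : ℕ) : (M k).IsGeneric y := fun j => by
  have h := hy (Nat.pair k j + 1)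
  rwa [iUnionDense, Nat.unpair_pair] at h

def iUnion : Forcing (⋃ k, B k) where
  ForcesMem s := ∃ k, (M k).ForcesMem s
  ForcesNotMem s := ∀ k t, s <+: t → ¬(M k).ForcesMem t
  dense := iUnionDense M
  forcesMem_mono h := fun ⟨k, hk⟩ => ⟨k, (M k).forcesMem_mono h hk⟩
  forcesNotMem_mono h hs k t ht := hs k t (h.trans ht)
  exists_mem_dense
    | 0, s => by
      by_cases h : ∃ k t, s <+: t ∧ (M k).ForcesMem t
      · obtain ⟨k, t, hst, ht⟩ := h
        exact ⟨t, Or.inl ⟨k, ht⟩, hst⟩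
      · push Not at h
        exact ⟨s, Or.inr h, List.prefix_refl s⟩
    | n + 1, s => (M _).exists_mem_dense _ s
  decides y hy := (hy 0).imp fun _ ⟨hs, hys⟩ => ⟨hys, hs⟩
  mem_of_forcesMem y s hy hys := fun ⟨k, hk⟩ =>
    mem_iUnion.2 ⟨k, (M k).mem_of_forcesMem y s (isGeneric_of_iUnionDense M hy k) hys hk⟩
  not_mem_of_forcesNotMem y s hy hys hs hyB := by
    obtain ⟨k, hk⟩ := mem_iUnion.1 hyB
    obtain ⟨t, hst, -, ht⟩ := exists_forcesMem (isGeneric_of_iUnionDense M hy k) hk hys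
    exact hs k t hst ht

end iUnion

theorem nonempty_of_measurableSet [TopologicalSpace α] [MeasurableSpace (ℕ → α)]
    [BorelSpace (ℕ → α)] {B : Set (ℕ → α)} (hB : MeasurableSet B) : Nonempty (Forcing B) := by
  rw [BorelSpace.measurable_eq (α := ℕ → α)] at hB
  induction B, hB using MeasurableSpace.generateFrom_induction with
  | hC U hU _ => exact ⟨ofIsOpen hU⟩
  | empty => exact ⟨ofIsOpen isOpen_empty⟩
  | compl B _ hM => exact hM.map compl
  | iUnion B _ hM => exact ⟨iUnion fun k => (hM k).some⟩

end Forcing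

theorem exists_countable_closed (S : Set α) (hS : S.Countable)
    (g : List α → List α → Set α) (hg : ∀ s t, (g s t).Countable) :
    ∃ A, S ⊆ A ∧ A.Countable ∧
      ∀ s t, (∀ x ∈ s, x ∈ A) → (∀ x ∈ t, x ∈ A) → g s t ⊆ A := by
  classical
  let lists (C : Set α) : Set (List α) := {l | ∀ x ∈ l, x ∈ C}
  have countable_lists (C : Set α) (hC : C.Countable) : (lists C).Countable := by
    have := hC.to_subtype
    refine (countable_range (List.map ((↑) : C → α))).mono fun l hl => ?_
    lift l to List C using hl
    exact mem_range_self l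
  let step (C : Set α) : Set α := C ∪ ⋃ s ∈ lists C, ⋃ t ∈ lists C, g s t
  let A (k : ℕ) : Set α := step^[k] S
  have hA_succ (k : ℕ) : A (k + 1) = step (A k) := Function.iterate_succ_apply' step k S
  have hA_mono : Monotone A :=
    monotone_nat_of_le_succ fun k => (hA_succ k).symm ▸ subset_union_left
  have hA_countable (k : ℕ) : (A k).Countable := by
    induction k with
    | zero => exact hS
    | succ k ih =>
      rw [hA_succ]
      exact ih.union <| (countable_lists _ ih).biUnion fun s _ =>
        (countable_lists _ ih).biUnion fun t _ => hg s t
  refine ⟨⋃ k, A k, subset_iUnion A 0, countable_iUnion hA_countable, fun s t hs ht => ?_⟩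
  obtain ⟨k, hk⟩ := hA_mono.directed_le.exists_mem_subset_of_finset_subset_biUnion
    (s := (s ++ t).toFinset) fun x hx => by
      rw [List.coe_toFinset] at hx
      exact (List.mem_append.1 hx).elim (hs x) (ht x)
  have hsk : s ∈ lists (A k) := fun x hx => hk (by simp [hx])
  have htk : t ∈ lists (A k) := fun x hx => hk (by simp [hx])
  have hstep : g s t ⊆ A (k + 1) := by
    rw [hA_succ]
    exact subset_union_of_subset_right (subset_iUnion₂_of_subset s hsk
      (subset_biUnion_of_mem (u := g s) htk)) _
  exact hstep.trans (subset_iUnion A (k + 1))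

theorem exists_monotone_forall_exists_mem {P ι : Type*} [Preorder P] [Nonempty P]
    [Countable ι] (D : ι → Set P) (hD : ∀ i, IsCofinal (D i)) :
    ∃ p : ℕ → P, Monotone p ∧ ∀ i, ∃ n, p n ∈ D i := by
  have := Encodable.ofCountable ι
  let 𝒟 (i : ι) : Order.Cofinal P := ⟨D i, hD i⟩
  exact ⟨_, Order.sequenceOfCofinals.monotone (Classical.arbitrary P) 𝒟,
    fun i => ⟨_, Order.sequenceOfCofinals.encode_mem (Classical.arbitrary P) 𝒟 i⟩⟩

structure PairCondition (A : Set α) where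
  fst : List α
  snd : List α
  fst_subset : ∀ x ∈ fst, x ∈ A
  snd_subset : ∀ x ∈ snd, x ∈ A

namespace PairCondition

variable {A : Set α}

instance : Preorder (PairCondition A) where
  le p q := p.fst <+: q.fst ∧ p.snd <+: q.snd
  le_refl p := ⟨List.prefix_refl _, List.prefix_refl _⟩
  le_trans _ _ _ h h' := ⟨h.1.trans h'.1, h.2.trans h'.2⟩

instance : Nonempty (PairCondition A) := ⟨⟨[], [], by simp, by simp⟩⟩

lemma isCofinal_mem_and_lt_length {a : α} (ha : a ∈ A) (k : ℕ) :
    IsCofinal {p : PairCondition A |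
      a ∈ p.fst ∧ a ∈ p.snd ∧ k < p.fst.length ∧ k < p.snd.length} := by
  intro p
  have hsub (l : List α) (hl : ∀ x ∈ l, x ∈ A) : ∀ x ∈ l ++ List.replicate (k + 1) a, x ∈ A :=
    fun x hx => (List.mem_append.1 hx).elim (hl x) fun hx => List.eq_of_mem_replicate hx ▸ ha
  exact ⟨⟨_, _, hsub _ p.fst_subset, hsub _ p.snd_subset⟩, by simp; omega,
    List.prefix_append _ _, List.prefix_append _ _⟩

end PairCondition

section Main

variable {F : (ℕ → ℝ) → ℕ → ℝ}
  (Φ : ∀ (m : ℕ) (q r : ℚ), Forcing {w | F w m ∈ Ioo (q : ℝ) r})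

def IsGenericFor (y : ℕ → ℝ) : Prop := ∀ m q r, (Φ m q r).IsGeneric y

def ForcesNe (m m' : ℕ) (s t : List ℝ) : Prop :=
  ∃ q r q' r' : ℚ, (r ≤ q' ∨ r' ≤ q) ∧ (Φ m q r).ForcesMem s ∧ (Φ m' q' r').ForcesMem t

def ForcesEq (m m' : ℕ) (s t : List ℝ) : Prop :=
  ∀ s' t', s <+: s' → t <+: t' → ¬ForcesNe Φ m m' s' t'

def IsForcedValue (m m' : ℕ) (s t : List ℝ) (c : ℝ) : Prop :=
  ∀ q r : ℚ, (q : ℝ) < c → c < r →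
    ∃ s' t', s <+: s' ∧ t <+: t' ∧ (Φ m q r).ForcesMem s' ∧ (Φ m' q r).ForcesMem t'

lemma exists_prefix_forcesEq_or_forcesNe (m m' : ℕ) (s t : List ℝ) :
    ∃ s' t', s <+: s' ∧ t <+: t' ∧ (ForcesEq Φ m m' s' t' ∨ ForcesNe Φ m m' s' t') := by
  by_cases h : ForcesEq Φ m m' s t
  · exact ⟨s, t, List.prefix_refl s, List.prefix_refl t, Or.inl h⟩
  · simp only [ForcesEq, not_forall, not_not] at h
    obtain ⟨s', t', hs, ht, hsep⟩ := h
    exact ⟨s', t', hs, ht, Or.inr hsep⟩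

variable {Φ}

lemma ForcesEq.eq_of_isForcedValue {m m' : ℕ} {s t : List ℝ} {c₁ c₂ : ℝ}
    (h : ForcesEq Φ m m' s t) (h₁ : IsForcedValue Φ m m' s t c₁)
    (h₂ : IsForcedValue Φ m m' s t c₂) : c₁ = c₂ := by
  wlog hle : c₁ ≤ c₂ generalizing c₁ c₂ with H
  · exact (H h₂ h₁ (le_of_not_ge hle)).symm
  refine hle.eq_or_lt.resolve_right fun hlt => ?_
  obtain ⟨q, hq⟩ := exists_rat_lt c₁
  obtain ⟨r, hr₁, hr₂⟩ := exists_rat_btwn hlt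
  obtain ⟨r', hr'⟩ := exists_rat_gt c₂
  obtain ⟨s₁, -, hs₁, -, hpos₁, -⟩ := h₁ q r hq hr₁
  obtain ⟨-, t₂, -, ht₂, -, hpos₂⟩ := h₂ r r' hr₂ hr'
  exact h s₁ t₂ hs₁ ht₂ ⟨q, r, r, r', Or.inl le_rfl, hpos₁, hpos₂⟩

lemma isForcedValue_of_eq {y z : ℕ → ℝ} (hy : IsGenericFor Φ y) (hz : IsGenericFor Φ z)
    {m m' : ℕ} {s t : List ℝ} (hs : y ∈ cyl s) (ht : z ∈ cyl t) (h : F y m = F z m') :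
    IsForcedValue Φ m m' s t (F y m) := by
  intro q r hq hr
  obtain ⟨s', hss', -, hs'⟩ := Forcing.exists_forcesMem (hy m q r) ⟨hq, hr⟩ hs
  obtain ⟨t', htt', -, ht'⟩ := Forcing.exists_forcesMem (hz m' q r)
    (show F z m' ∈ Ioo (q : ℝ) r from h ▸ ⟨hq, hr⟩) ht
  exact ⟨s', t', hss', htt', hs', ht'⟩

lemma ne_of_forcesNe {y z : ℕ → ℝ} (hy : IsGenericFor Φ y) (hz : IsGenericFor Φ z)
    {m m' : ℕ} {s t : List ℝ} (hs : y ∈ cyl s) (ht : z ∈ cyl t) (h : ForcesNe Φ m m' s t) :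
    F y m ≠ F z m' := by
  obtain ⟨q, r, q', r', hqr, hs', ht'⟩ := h
  obtain ⟨h₁, h₁'⟩ : F y m ∈ Ioo (q : ℝ) r := (Φ m q r).mem_of_forcesMem y s (hy m q r) hs hs'
  obtain ⟨h₂, h₂'⟩ : F z m' ∈ Ioo (q' : ℝ) r' :=
    (Φ m' q' r').mem_of_forcesMem z t (hz m' q' r') ht ht'
  rcases hqr with h | h <;> have := (Rat.cast_le (K := ℝ)).2 h <;> intro <;> linarith

variable (Φ) in
structure Saturated (A : Set ℝ) : Prop where
  isCofinal_fst (m : ℕ) (q r : ℚ) (n : ℕ) :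
    IsCofinal {p : PairCondition A | p.fst ∈ (Φ m q r).dense n}
  isCofinal_snd (m : ℕ) (q r : ℚ) (n : ℕ) :
    IsCofinal {p : PairCondition A | p.snd ∈ (Φ m q r).dense n}
  isCofinal_forcesEq_or_forcesNe (m m' : ℕ) :
    IsCofinal {p : PairCondition A | ForcesEq Φ m m' p.fst p.snd ∨ ForcesNe Φ m m' p.fst p.snd}
  mem_of_isForcedValue (m m' : ℕ) (p : PairCondition A) (c : ℝ) :
    ForcesEq Φ m m' p.fst p.snd → IsForcedValue Φ m m' p.fst p.snd c → c ∈ A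

variable (Φ) in
theorem exists_saturated : ∃ A : Set ℝ, (0 : ℝ) ∈ A ∧ A.Countable ∧ Saturated Φ A := by
  choose ext hext using fun (i : ℕ × ℚ × ℚ × ℕ) s =>
    (Φ i.1 i.2.1 i.2.2.1).exists_mem_dense i.2.2.2 s
  choose sExt tExt hsExt htExt hdec using fun (i : ℕ × ℕ) s t =>
    exists_prefix_forcesEq_or_forcesNe Φ i.1 i.2 s t
  let forcedValues (s t : List ℝ) : Set ℝ :=
    ⋃ (m) (m'), {c | ForcesEq Φ m m' s t ∧ IsForcedValue Φ m m' s t c}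
  have h_forcedValues (s t : List ℝ) : (forcedValues s t).Countable :=
    countable_iUnion fun m => countable_iUnion fun m' => Subsingleton.countable fun c₁ h₁ c₂ h₂ =>
      h₁.1.eq_of_isForcedValue h₁.2 h₂.2
  obtain ⟨A, h0A, hA, hclosed⟩ := exists_countable_closed {0} (countable_singleton 0)
    (fun s t => (⋃ i, {x | x ∈ ext i s}) ∪ (⋃ i, {x | x ∈ sExt i s t ∨ x ∈ tExt i s t}) ∪
      forcedValues s t)
    fun s t => ((countable_iUnion fun i => (ext i s).finite_toSet.countable).union
      (countable_iUnion fun i => ((sExt i s t).finite_toSet.union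
        (tExt i s t).finite_toSet).countable)).union (h_forcedValues s t)
  have ext_subset (l : List ℝ) (hl : ∀ x ∈ l, x ∈ A) (i : ℕ × ℚ × ℚ × ℕ) :
      ∀ x ∈ ext i l, x ∈ A := fun x hx =>
    hclosed l l hl hl (Or.inl (Or.inl (mem_iUnion.2 ⟨i, hx⟩)))
  refine ⟨A, h0A rfl, hA, ⟨fun m q r n p => ?_, fun m q r n p => ?_, fun m m' p => ?_, ?_⟩⟩
  · exact ⟨⟨_, p.snd, ext_subset _ p.fst_subset (m, q, r, n), p.snd_subset⟩,
      (hext (m, q, r, n) p.fst).1, (hext _ _).2, List.prefix_refl _⟩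
  · exact ⟨⟨p.fst, _, p.fst_subset, ext_subset _ p.snd_subset (m, q, r, n)⟩,
      (hext (m, q, r, n) p.snd).1, List.prefix_refl _, (hext _ _).2⟩
  · have hsub := hclosed p.fst p.snd p.fst_subset p.snd_subset
    exact ⟨⟨_, _, fun x hx => hsub (Or.inl (Or.inr (mem_iUnion.2 ⟨(m, m'), Or.inl hx⟩))),
      fun x hx => hsub (Or.inl (Or.inr (mem_iUnion.2 ⟨(m, m'), Or.inr hx⟩)))⟩,
      hdec (m, m') p.fst p.snd, hsExt _ _ _, htExt _ _ _⟩
  · exact fun m m' p c hEq hc => hclosed p.fst p.snd p.fst_subset p.snd_subset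
      (Or.inr (mem_iUnion₂.2 ⟨m, m', hEq, hc⟩))

theorem exists_generic_enumerations {A : Set ℝ} (hA : Saturated Φ A) (hcount : A.Countable)
    (hne : A.Nonempty) :
    ∃ y z : ℕ → ℝ, range y = A ∧ range z = A ∧ IsGenericFor Φ y ∧ IsGenericFor Φ z ∧
      ∀ m m', ∃ p : PairCondition A, y ∈ cyl p.fst ∧ z ∈ cyl p.snd ∧
        (ForcesEq Φ m m' p.fst p.snd ∨ ForcesNe Φ m m' p.fst p.snd) := by
  have := hcount.to_subtype
  obtain ⟨a₀, ha₀⟩ := hne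
  let D : (ℕ × ℚ × ℚ × ℕ) ⊕ (ℕ × ℚ × ℚ × ℕ) ⊕ (ℕ × ℕ) ⊕ (A × ℕ) → Set (PairCondition A)
    | .inl (m, q, r, n) => {p | p.fst ∈ (Φ m q r).dense n}
    | .inr (.inl (m, q, r, n)) => {p | p.snd ∈ (Φ m q r).dense n}
    | .inr (.inr (.inl (m, m'))) => {p | ForcesEq Φ m m' p.fst p.snd ∨ ForcesNe Φ m m' p.fst p.snd}
    | .inr (.inr (.inr (a, k))) =>
      {p | ↑a ∈ p.fst ∧ ↑a ∈ p.snd ∧ k < p.fst.length ∧ k < p.snd.length}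
  obtain ⟨p, hmono, hmeet⟩ := exists_monotone_forall_exists_mem D <| by
    rintro (⟨m, q, r, n⟩ | ⟨m, q, r, n⟩ | ⟨m, m'⟩ | ⟨⟨a, ha⟩, k⟩)
    exacts [hA.isCofinal_fst m q r n, hA.isCofinal_snd m q r n, hA.isCofinal_forcesEq_or_forcesNe m m',
      PairCondition.isCofinal_mem_and_lt_length ha k]
  have hcover (a : ℝ) (ha : a ∈ A) (k : ℕ) :
      ∃ i, a ∈ (p i).fst ∧ a ∈ (p i).snd ∧ k < (p i).fst.length ∧ k < (p i).snd.length :=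
    hmeet (Sum.inr (Sum.inr (Sum.inr (⟨a, ha⟩, k))))
  obtain ⟨y, hyA, hy⟩ := exists_range_eq_of_chain (fun i j h => (hmono h).1)
    (fun i => (p i).fst_subset) (fun a ha => (hcover a ha 0).imp fun _ h => h.1)
    fun k => (hcover a₀ ha₀ k).imp fun _ h => h.2.2.1
  obtain ⟨z, hzA, hz⟩ := exists_range_eq_of_chain (fun i j h => (hmono h).2)
    (fun i => (p i).snd_subset) (fun a ha => (hcover a ha 0).imp fun _ h => h.2.1)
    fun k => (hcover a₀ ha₀ k).imp fun _ h => h.2.2.2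
  refine ⟨y, z, hyA, hzA, fun m q r n => ?_, fun m q r n => ?_, fun m m' => ?_⟩
  · obtain ⟨i, hi⟩ := hmeet (Sum.inl (m, q, r, n))
    exact ⟨_, hi, hy i⟩
  · obtain ⟨i, hi⟩ := hmeet (Sum.inr (Sum.inl (m, q, r, n)))
    exact ⟨_, hi, hz i⟩
  · obtain ⟨i, hi⟩ := hmeet (Sum.inr (Sum.inr (Sum.inl (m, m'))))
    exact ⟨p i, hy i, hz i, hi⟩

end Main

theorem exists_range_subset_of_forcing {F : (ℕ → ℝ) → ℕ → ℝ}
    (Φ : ∀ (m : ℕ) (q r : ℚ), Forcing {w | F w m ∈ Ioo (q : ℝ) r})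
    (hHom : ∀ x y : ℕ → ℝ, range x = range y → range (F x) = range (F y)) :
    ∃ x : ℕ → ℝ, range (F x) ⊆ range x := by
  obtain ⟨A, h0, hcount, hA⟩ := exists_saturated Φ
  obtain ⟨y, z, hyA, hzA, hy, hz, hdec⟩ := exists_generic_enumerations hA hcount ⟨0, h0⟩
  refine ⟨y, ?_⟩
  rintro _ ⟨n, rfl⟩
  obtain ⟨m', hm'⟩ : F y n ∈ range (F z) := hHom y z (hyA.trans hzA.symm) ▸ mem_range_self n
  obtain ⟨p, hps, hpt, hEq | hSep⟩ := hdec n m'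
  · rw [hyA]
    exact hA.mem_of_isForcedValue n m' p _ hEq (isForcedValue_of_eq hy hz hps hpt hm'.symm)
  · exact absurd hm'.symm (ne_of_forcesNe hy hz hps hpt hSep)

end F2Homomorphism

theorem stmt16 (F : (ℕ → ℝ) → (ℕ → ℝ))
    (hBorel : Measurable F)
    (hHom : ∀ x y : ℕ → ℝ, range x = range y → range (F x) = range (F y)) :
    ∃ x : ℕ → ℝ, range (F x) ⊆ range x :=
  F2Homomorphism.exists_range_subset_of_forcing (fun m _ _ =>
    (F2Homomorphism.Forcing.nonempty_of_measurableSet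
      ((measurable_pi_apply m).comp hBorel measurableSet_Ioo)).some) hHom
end

section
/- Let P be a countable set and for z, α ∈ 2^P let X_{z,α} = {x ∈ 2^P : x(p) = α(p) for all p with z(p) = 1}. If C ⊆ 2^P is comeager, then for comeagerly many z ∈ 2^P, for comeagerly many α ∈ 2^P, X_{z,α} ⊆ C. -/
open Set Topology TopologicalSpace

/-- The Silver cube of points agreeing with `α` on the support of `z`. -/
def SilverCube {P : Type} (z α : P → Bool) : Set (P → Bool) :=
  {x | ∀ p, z p = true → x p = α p}

section Aux

variable {P : Type}

/-- The cylinder of points agreeing with `x` on the finite set `F`. -/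
def Cyl (x : P → Bool) (F : Finset P) : Set (P → Bool) := {y | ∀ p ∈ F, y p = x p}

lemma isOpen_cyl (x : P → Bool) (F : Finset P) : IsOpen (Cyl x F) := by
  have h : Cyl x F = ⋂ p ∈ F, {y : P → Bool | y p = x p} := by
    ext y; simp [Cyl]
  rw [h]
  refine isOpen_biInter_finset (f := fun p => {y : P → Bool | y p = x p}) fun p _ => ?_
  show IsOpen ((fun y : P → Bool => y p) ⁻¹' {x p})
  exact (isOpen_discrete {x p}).preimage (continuous_apply p)

lemma mem_cyl_self (x : P → Bool) (F : Finset P) : x ∈ Cyl x F := fun _ _ => rfl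

lemma exists_cyl_subset {o : Set (P → Bool)} (ho : IsOpen o) {x : P → Bool} (hx : x ∈ o) :
    ∃ F : Finset P, Cyl x F ⊆ o := by
  have hmem : o ∈ nhds x := ho.mem_nhds hx
  rw [nhds_pi] at hmem
  obtain ⟨I, t, ht, hsub⟩ := Filter.mem_pi'.1 hmem
  refine ⟨I, fun y hy => hsub fun p hp => ?_⟩
  have : y p = x p := hy p hp
  rw [this]
  exact mem_of_mem_nhds (ht p)

/-- Core density lemma: for a dense open `U`, the set of pairs `(z, α)` whose Silver cube
is contained in `U` has dense interior. -/
lemma dense_interior_silver {P : Type} {U : Set (P → Bool)} (hUo : IsOpen U) (hUd : Dense U) :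
    Dense (interior {zα : (P → Bool) × (P → Bool) | SilverCube zα.1 zα.2 ⊆ U}) := by
  classical
  rw [dense_iff_inter_open]
  rintro W hW ⟨⟨z₀, α₀⟩, hmem⟩
  -- extract a basic cylinder neighborhood inside W
  obtain ⟨u, hu, v, hv, huv⟩ := mem_nhds_prod_iff.1 (hW.mem_nhds hmem)
  obtain ⟨u', hu'sub, hu'o, hz₀⟩ := mem_nhds_iff.1 hu
  obtain ⟨v', hv'sub, hv'o, hα₀⟩ := mem_nhds_iff.1 hv
  obtain ⟨F₁, hF₁⟩ := exists_cyl_subset hu'o hz₀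
  obtain ⟨F₂, hF₂⟩ := exists_cyl_subset hv'o hα₀
  set F : Finset P := F₁ ∪ F₂ with hF
  have hcylW : Cyl z₀ F ×ˢ Cyl α₀ F ⊆ W := by
    rintro ⟨z, α⟩ ⟨hz, hα⟩
    refine huv ⟨hu'sub (hF₁ fun p hp => hz p (Finset.mem_union_left _ hp)),
      hv'sub (hF₂ fun p hp => hα p (Finset.mem_union_right _ hp))⟩
  -- the new parameter z : same as z₀ on F, true elsewhere
  set z : P → Bool := fun p => if p ∈ F then z₀ p else true with hzdef
  -- maps overriding α on the "free" coordinates of the cube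
  set f : (↥F → Bool) → (P → Bool) → (P → Bool) :=
    fun w α p => if h : p ∈ F ∧ z₀ p = false then w ⟨p, h.1⟩ else α p with hfdef
  have hfc : ∀ w, Continuous (f w) := by
    intro w
    refine continuous_pi fun p => ?_
    by_cases h : p ∈ F ∧ z₀ p = false
    · simp only [hfdef, dif_pos h]; exact continuous_const
    · simp only [hfdef, dif_neg h]; exact continuous_apply p
  have hfdense : ∀ w, Dense ((f w) ⁻¹' U) := by
    intro w
    rw [dense_iff_inter_open]
    rintro O hO ⟨β, hβ⟩
    obtain ⟨H, hH⟩ := exists_cyl_subset hO hβ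
    obtain ⟨x, hxcyl, hxU⟩ :=
      hUd.inter_open_nonempty (Cyl (f w β) (H ∪ F)) (isOpen_cyl _ _)
        ⟨f w β, mem_cyl_self _ _⟩
    refine ⟨fun p => if p ∈ F ∧ z₀ p = false then β p else x p, hH fun p hp => ?_, ?_⟩
    · by_cases h : p ∈ F ∧ z₀ p = false
      · simp [h]
      · simp only [if_neg h]
        have := hxcyl p (Finset.mem_union_left _ hp)
        rw [this]
        simp only [hfdef, dif_neg h]
    · show f w _ ∈ U
      have hfx : f w (fun p => if p ∈ F ∧ z₀ p = false then β p else x p) = x := by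
        funext p
        by_cases h : p ∈ F ∧ z₀ p = false
        · have hx : x p = f w β p := hxcyl p (Finset.mem_union_right _ h.1)
          simp only [hfdef, dif_pos h] at hx ⊢
          exact hx.symm
        · simp only [hfdef, dif_neg h, if_neg h]
      rw [hfx]; exact hxU
  -- choose α generic for all the finitely many w's, agreeing with α₀ on F
  have hres : (⋂ w : ↥F → Bool, (f w) ⁻¹' U) ∈ residual (P → Bool) :=
    countable_iInter_mem.2 fun w =>
      residual_of_dense_open (hUo.preimage (hfc w)) (hfdense w)
  obtain ⟨α, hαcyl, hα⟩ :=
    (dense_of_mem_residual hres).inter_open_nonempty (Cyl α₀ F) (isOpen_cyl _ _)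
      ⟨α₀, mem_cyl_self _ _⟩
  simp only [Set.mem_iInter, Set.mem_preimage] at hα
  -- for each w, get a finite support witnessing openness of U at f w α
  choose Hw hHw using fun w : ↥F → Bool => exists_cyl_subset hUo (hα w)
  set H : Finset P := F ∪ Finset.univ.biUnion Hw with hHdef
  have hkey : Cyl z H ×ˢ Cyl α H ⊆
      {zα : (P → Bool) × (P → Bool) | SilverCube zα.1 zα.2 ⊆ U} := by
    rintro ⟨z', α'⟩ ⟨hz', hα'⟩ x hx
    set w : ↥F → Bool := fun q => x q.1 with hwdef
    refine hHw w fun p hp => ?_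
    have hpH : p ∈ H := Finset.mem_union_right _ (Finset.mem_biUnion.2 ⟨w, Finset.mem_univ _, hp⟩)
    by_cases h : p ∈ F ∧ z₀ p = false
    · simp only [hfdef, dif_pos h, hwdef]
    · simp only [hfdef, dif_neg h]
      have hzp : z p = true := by
        by_cases hpF : p ∈ F
        · have : z₀ p = true := by
            rcases Bool.eq_false_or_eq_true (z₀ p) with h1 | h0
            · exact h1
            · exact absurd ⟨hpF, h0⟩ h
          simp [hzdef, hpF, this]
        · simp [hzdef, hpF]
      have hz'p : z' p = true := (hz' p hpH).trans hzp
      exact (hx p hz'p).trans (hα' p hpH)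
  have hzW : z ∈ Cyl z₀ F := by
    intro p hp; simp [hzdef, hp]
  refine ⟨(z, α), hcylW ⟨hzW, hαcyl⟩, ?_⟩
  exact mem_interior.2 ⟨Cyl z H ×ˢ Cyl α H, hkey, (isOpen_cyl _ _).prod (isOpen_cyl _ _),
    mem_cyl_self _ _, mem_cyl_self _ _⟩

/-- Half of Kuratowski–Ulam: a dense open subset of a product has dense sections
at residually many points, when the second factor is second countable. -/
lemma residual_dense_sections {X Y : Type*} [TopologicalSpace X] [TopologicalSpace Y]
    [SecondCountableTopology Y] {W : Set (X × Y)} (hWo : IsOpen W) (hWd : Dense W) :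
    {x | Dense {y | (x, y) ∈ W}} ∈ residual X := by
  obtain ⟨B, hBc, -, hB⟩ := exists_countable_basis Y
  have key : ∀ V ∈ B, {x : X | V.Nonempty → ∃ y ∈ V, (x, y) ∈ W} ∈ residual X := by
    intro V hV
    by_cases hne : V.Nonempty
    · have hVo : IsOpen V := hB.isOpen hV
      have h1 : IsOpen {x : X | ∃ y ∈ V, (x, y) ∈ W} := by
        have h : {x : X | ∃ y ∈ V, (x, y) ∈ W} = Prod.fst '' (W ∩ Set.univ ×ˢ V) := by
          ext x
          constructor
          · rintro ⟨y, hyV, hyW⟩; exact ⟨(x, y), ⟨hyW, trivial, hyV⟩, rfl⟩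
          · rintro ⟨⟨a, b⟩, ⟨h1, -, h2⟩, rfl⟩; exact ⟨b, h2, h1⟩
        rw [h]
        exact isOpenMap_fst _ (hWo.inter (isOpen_univ.prod hVo))
      have h2 : Dense {x : X | ∃ y ∈ V, (x, y) ∈ W} := by
        rw [dense_iff_inter_open]
        intro O hO hOne
        obtain ⟨⟨a, b⟩, ⟨hOa, hVb⟩, hWab⟩ :=
          hWd.inter_open_nonempty (O ×ˢ V) (hO.prod hVo) (hOne.prod hne)
        exact ⟨a, hOa, b, hVb, hWab⟩
      have h3 : {x : X | V.Nonempty → ∃ y ∈ V, (x, y) ∈ W} =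
          {x : X | ∃ y ∈ V, (x, y) ∈ W} := by
        ext x; simp [hne]
      rw [h3]
      exact residual_of_dense_open h1 h2
    · have h3 : {x : X | V.Nonempty → ∃ y ∈ V, (x, y) ∈ W} = Set.univ := by
        ext x; simp [hne]
      rw [h3]; exact Filter.univ_mem
  have hint : (⋂ V ∈ B, {x : X | V.Nonempty → ∃ y ∈ V, (x, y) ∈ W}) ∈ residual X :=
    (countable_bInter_mem hBc).2 key
  refine Filter.mem_of_superset hint fun x hx => ?_
  simp only [Set.mem_iInter] at hx
  refine Set.mem_setOf_eq ▸ hB.dense_iff.2 fun o ho hone => ?_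
  obtain ⟨y, hyV, hyW⟩ := hx o ho hone
  exact ⟨y, hyV, hyW⟩

end Aux

theorem stmt17 {P : Type} [Countable P]
    (C : Set (P → Bool)) (hC : C ∈ residual (P → Bool)) :
    {z : P → Bool | {α : P → Bool | SilverCube z α ⊆ C} ∈ residual (P → Bool)}
      ∈ residual (P → Bool) := by
  obtain ⟨S, hSo, hSd, hSct, hSC⟩ := mem_residual_iff.1 hC
  haveI : Countable ↥S := hSct.to_subtype
  -- for each dense open t ∈ S, the interior of the "cube inside t" set is dense open
  set W : ↥S → Set ((P → Bool) × (P → Bool)) :=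
    fun t => interior {zα : (P → Bool) × (P → Bool) | SilverCube zα.1 zα.2 ⊆ (t : Set _)}
    with hWdef
  have hWo : ∀ t, IsOpen (W t) := fun t => isOpen_interior
  have hWd : ∀ t, Dense (W t) :=
    fun t => dense_interior_silver (hSo t t.2) (hSd t t.2)
  have hT : (⋂ t : ↥S, {z : P → Bool | Dense {α | (z, α) ∈ W t}}) ∈ residual (P → Bool) :=
    countable_iInter_mem.2 fun t => residual_dense_sections (hWo t) (hWd t)
  refine Filter.mem_of_superset hT fun z hz => ?_
  simp only [Set.mem_iInter, Set.mem_setOf_eq] at hz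
  have hsec : (⋂ t : ↥S, {α : P → Bool | (z, α) ∈ W t}) ∈ residual (P → Bool) := by
    refine countable_iInter_mem.2 fun t => residual_of_dense_open ?_ (hz t)
    exact (hWo t).preimage (Continuous.prodMk_right z)
  refine Filter.mem_of_superset hsec fun α hα => ?_
  simp only [Set.mem_iInter, Set.mem_setOf_eq] at hα
  intro x hx
  refine hSC (Set.mem_sInter.2 fun t ht => ?_)
  exact interior_subset (hα ⟨t, ht⟩) hx
end

section
/- Let 𝓘 be an ideal on a countable set P, and define the equivalence relation E_𝓘 on 2^P by x E_𝓘 y iff {p : x(p) ≠ y(p)} ∈ 𝓘. For x,z ∈ 2^P write x↾z for the pointwise minimum of x and z. Then the following are equivalent: (a) for all x,y ∈ 2^P the set {z : ∀x'∀y' (x E_𝓘 x' ∧ y E_𝓘 y' ∧ x'↾z = y'↾z → x' E_𝓘 y')} is comeager; (b) for all x,y with ¬(x E_𝓘 y), the set {z ∈ 2^P : ¬(x↾z E_𝓘 y↾z)} is comeager. -/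
/-- The equivalence relation induced by an ideal `I` on a countable set `P`. -/
def EIdeal {P : Type} (I : Set (Set P)) (x y : P → Bool) : Prop :=
  {p | x p ≠ y p} ∈ I

/-- The pointwise minimum `x↾z`. -/
def rst {P : Type} (x z : P → Bool) : P → Bool :=
  fun p => x p && z p

theorem stmt18 {P : Type} [Countable P] (I : Set (Set P))
    (hEmpty : ∅ ∈ I)
    (hSub : ∀ A B : Set P, A ⊆ B → B ∈ I → A ∈ I)
    (hUnion : ∀ A B : Set P, A ∈ I → B ∈ I → A ∪ B ∈ I) :
    (∀ x y : P → Bool,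
      {z : P → Bool | ∀ x' y' : P → Bool,
        EIdeal I x x' → EIdeal I y y' → rst x' z = rst y' z → EIdeal I x' y'}
        ∈ residual (P → Bool)) ↔
    (∀ x y : P → Bool, ¬ EIdeal I x y →
      {z : P → Bool | ¬ EIdeal I (rst x z) (rst y z)} ∈ residual (P → Bool)) := by
  have hrefl : ∀ x : P → Bool, EIdeal I x x := by
    intro x
    have : {p | x p ≠ x p} = (∅ : Set P) := by ext p; simp
    rw [EIdeal, this]; exact hEmpty
  have hsymm : ∀ x y : P → Bool, EIdeal I x y → EIdeal I y x := by
    intro x y h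
    refine hSub _ _ ?_ h
    intro p hp
    exact fun he => hp (Set.mem_setOf.mp he).symm
  have htrans : ∀ x y w : P → Bool, EIdeal I x y → EIdeal I y w → EIdeal I x w := by
    intro x y w h1 h2
    refine hSub _ _ ?_ (hUnion _ _ h1 h2)
    intro p hp
    by_cases h : x p = y p
    · exact Or.inr (fun he => hp (h.trans he))
    · exact Or.inl h
  constructor
  · intro h x y hxy
    refine Filter.mem_of_superset (h x y) ?_
    intro z hz hE
    apply hxy
    set y' : P → Bool := fun p => cond (z p) (x p) (y p) with hy'def
    have hyy' : EIdeal I y y' := by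
      refine hSub _ _ ?_ hE
      intro p hp
      simp only [Set.mem_setOf, hy'def] at hp ⊢
      cases hzp : z p with
      | false => simp [hzp] at hp
      | true => simp [hzp] at hp ⊢; simp [rst, hzp]; exact fun he => hp he.symm
    have hrsteq : rst x z = rst y' z := by
      funext p
      simp only [rst, hy'def]
      cases hzp : z p <;> simp [hzp]
    have hxy' : EIdeal I x y' := hz x y' (hrefl x) hyy' hrsteq
    refine hSub _ _ ?_ (hUnion _ _ hxy' (hsymm _ _ hyy'))
    intro p hp
    simp only [Set.mem_setOf, hy'def] at hp ⊢
    cases hzp : z p with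
    | false => exact Or.inl (by simpa [hzp] using hp)
    | true => exact Or.inr (by simpa [hzp] using hp)
  · intro h x y
    by_cases hxy : EIdeal I x y
    · exact Filter.univ_mem'
        (fun z x' y' hx hy _ => htrans _ _ _ (htrans _ _ _ (hsymm _ _ hx) hxy) hy)
    · refine Filter.mem_of_superset (h x y hxy) ?_
      intro z hz x' y' hx hy hrst
      exfalso
      apply hz
      have h1 : EIdeal I (rst x z) (rst x' z) := by
        refine hSub _ _ ?_ hx
        intro p hp
        simp only [Set.mem_setOf, rst] at hp ⊢
        cases hzp : z p <;> simp [hzp] at hp ⊢; exact hp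
      have h2 : EIdeal I (rst y' z) (rst y z) := by
        refine hSub _ _ ?_ (hsymm _ _ hy)
        intro p hp
        simp only [Set.mem_setOf, rst] at hp ⊢
        cases hzp : z p <;> simp [hzp] at hp ⊢; exact hp
      exact htrans _ _ _ (htrans _ _ _ h1 (hrst ▸ hrefl _)) h2
end
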